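/- arXiv:2202.04371 — 13 statements merged into one kernel-verified Lean document; each statement's English description precedes it below -/
import Mathlib

section
/- Let S be a finite set of size at least r, H_1,...,H_q subsets of S, and r, r_1,...,r_q non-negative integers satisfying |H_i ∩ H_j| ≤ r_i + r_j − r for all 1 ≤ i < j ≤ q. Then the family I = {X ⊆ S : |X| ≤ r and |X ∩ H_i| ≤ r_i for all i} is the collection of independent sets of a matroid on S. -/
open Matroid Set

variable {α : Type*}

/-- The rank of a set `Z` in a matroid `M`: the maximum size of an independent subset of `Z`. -/
noncomputable def mrk (M : Matroid α) (Z : Set α) : ℕ :=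
  sSup {n | ∃ I, M.Indep I ∧ I ⊆ Z ∧ I.ncard = n}

/-- Deletion of a set `D` from a matroid `M`. -/
def mdelete (M : Matroid α) (D : Set α) : Matroid α := M ↾ (M.E \ D)

/-- Contraction of a set `C` in a matroid `M`, defined as `(M✶ \ C)✶`. -/
def mcontract (M : Matroid α) (C : Set α) : Matroid α := (mdelete M✶ C)✶

/-- `N` is a minor of `M` if it is obtained by a contraction followed by a deletion. -/
def IsMinorOf (N M : Matroid α) : Prop := ∃ C D, N = mdelete (mcontract M C) D

/-- `M` is an elementary split matroid: its independent sets are the sets `X ⊆ S` with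
`|X| ≤ r` and `|X ∩ H i| ≤ r i` for hyperedges `H i ⊆ S` satisfying (H1). -/
def IsElemSplit (M : Matroid α) : Prop :=
  ∃ (q : ℕ) (H : Fin q → Set α) (r : ℕ) (rr : Fin q → ℕ),
    M.E.Finite ∧ r ≤ M.E.ncard ∧ (∀ i, H i ⊆ M.E) ∧
    (∀ i j : Fin q, i ≠ j → (H i ∩ H j).ncard + r ≤ rr i + rr j) ∧
    ∀ X, X ⊆ M.E → (M.Indep X ↔ X.ncard ≤ r ∧ ∀ i, (X ∩ H i).ncard ≤ rr i)

/-- `M` is (isomorphic to) the uniform matroid `U_{k,n}`. -/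
def IsUnif (M : Matroid α) (k n : ℕ) : Prop :=
  M.E.Finite ∧ M.E.ncard = n ∧ ∀ I, I ⊆ M.E → (M.Indep I ↔ I.ncard ≤ k)

/-- `e` is a loop of `M`. -/
def IsLoopOf (M : Matroid α) (e : α) : Prop := e ∈ M.E ∧ ¬ M.Indep {e}

/-- `e` is a coloop of `M`, i.e. a loop of the dual. -/
def IsColoopOf (M : Matroid α) (e : α) : Prop := IsLoopOf M✶ e

/-- A set `Z` is cyclic in `M` if the restriction `M | Z` has no coloops. -/
def IsCyclicSet (M : Matroid α) (Z : Set α) : Prop :=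
  Z ⊆ M.E ∧ ∀ e ∈ Z, ¬ IsColoopOf (M ↾ Z) e

/-- A proper cyclic flat: a cyclic flat of nonzero rank that is not the ground set. -/
def ProperCyclicFlat (M : Matroid α) (F : Set α) : Prop :=
  M.IsFlat F ∧ IsCyclicSet M F ∧ mrk M F ≠ 0 ∧ F ≠ M.E

/-- `M` is connected: `r(X) + r(S − X) > r(S)` for every nonempty proper `X ⊆ S`. -/
def ConnectedM (M : Matroid α) : Prop :=
  ∀ X, X ⊆ M.E → X.Nonempty → X ≠ M.E → mrk M M.E < mrk M X + mrk M (M.E \ X)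

/-- `M` is (isomorphic to) the matroid `U_{0,1} ⊕ U_{1,2} ⊕ U_{1,1}`. -/
def IsU01U12U11 (M : Matroid α) : Prop :=
  ∃ a b c d : α, ([a, b, c, d] : List α).Nodup ∧ M.E = {a, b, c, d} ∧
    ∀ X, X ⊆ M.E → (M.Indep X ↔ a ∉ X ∧ ¬ ({b, c} : Set α) ⊆ X)

/-! Only the augmentation axiom needs (H1). Suppose `|I| < |J|` and no `e ∈ J \ I` can be added
to `I`. Since `|I| < r`, each such `e` lies in a hyperedge `H i` that is tight for `I`, i.e.
`|I ∩ H i| = rr i`. Two distinct tight hyperedges would give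
`rr i + rr j ≤ |I| + |H i ∩ H j| < r + |H i ∩ H j|`, contradicting (H1), so one tight hyperedge
`H i₀` contains all of `J \ I`. Then `|I| < |J|` forces `rr i₀ = |I ∩ H i₀| < |J ∩ H i₀| ≤ rr i₀`. -/

namespace Set

variable {I J A B : Set α}

theorem ncard_inter_add_ncard_inter_le (hI : I.Finite) (hAB : (A ∩ B).Finite) :
    (I ∩ A).ncard + (I ∩ B).ncard ≤ I.ncard + (A ∩ B).ncard := by
  have := ncard_inter_add_ncard_union _ _ (hI.inter_of_left A) (hI.inter_of_left B)
  have : (I ∩ A ∪ I ∩ B).ncard ≤ I.ncard :=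
    ncard_le_ncard (union_subset inter_subset_left inter_subset_left) hI
  have : (I ∩ A ∩ (I ∩ B)).ncard ≤ (A ∩ B).ncard :=
    ncard_le_ncard (inter_subset_inter inter_subset_right inter_subset_right) hAB
  omega

theorem ncard_inter_lt_ncard_inter_of_diff_subset (hI : I.Finite) (hJ : J.Finite)
    (hIJ : I.ncard < J.ncard) (hJIA : J \ I ⊆ A) : (I ∩ A).ncard < (J ∩ A).ncard := by
  have hJA : (J \ A).ncard ≤ (I \ A).ncard :=
    ncard_le_ncard (fun x hx ↦ ⟨by_contra fun hxI ↦ hx.2 (hJIA ⟨hx.1, hxI⟩), hx.2⟩) hI.sdiff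
  have := ncard_inter_add_ncard_sdiff_eq_ncard I A hI
  have := ncard_inter_add_ncard_sdiff_eq_ncard J A hJ
  omega

end Set

section ElementarySplit

variable {ι : Type*} {S : Set α} {H : ι → Set α} {r : ℕ} {rr : ι → ℕ} {I J : Set α} {e : α}

def SplitIndep (S : Set α) (H : ι → Set α) (r : ℕ) (rr : ι → ℕ) (X : Set α) : Prop :=
  X ⊆ S ∧ X.ncard ≤ r ∧ ∀ i, (X ∩ H i).ncard ≤ rr i

theorem splitIndep_empty : SplitIndep S H r rr ∅ :=
  ⟨empty_subset S, by simp, fun i ↦ by simp⟩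

theorem SplitIndep.subset (hS : S.Finite) (hJ : SplitIndep S H r rr J) (hIJ : I ⊆ J) :
    SplitIndep S H r rr I := by
  have hJfin : J.Finite := hS.subset hJ.1
  refine ⟨hIJ.trans hJ.1, (ncard_le_ncard hIJ hJfin).trans hJ.2.1, fun i ↦ ?_⟩
  exact (ncard_le_ncard (inter_subset_inter_left _ hIJ) (hJfin.inter_of_left _)).trans (hJ.2.2 i)

theorem SplitIndep.exists_ncard_inter_eq_of_not_insert (hS : S.Finite)
    (hI : SplitIndep S H r rr I) (heS : e ∈ S) (heI : e ∉ I) (hIr : I.ncard < r)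
    (hne : ¬ SplitIndep S H r rr (insert e I)) : ∃ i, e ∈ H i ∧ (I ∩ H i).ncard = rr i := by
  have hcard : (insert e I).ncard ≤ r := by
    rw [ncard_insert_of_notMem heI (hS.subset hI.1)]
    omega
  obtain ⟨i, hi⟩ : ∃ i, rr i < (insert e I ∩ H i).ncard := by
    simpa [SplitIndep, insert_subset heS hI.1, hcard] using hne
  have hIi := hI.2.2 i
  by_cases heH : e ∈ H i
  · rw [insert_inter_of_mem heH] at hi
    have := ncard_insert_le e (I ∩ H i)
    exact ⟨i, heH, by omega⟩
  · rw [insert_inter_of_notMem heH] at hi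
    omega

theorem eq_of_ncard_inter_eq_of_ncard_lt {i j : ι} (hI : I.Finite) (hHij : (H i ∩ H j).Finite)
    (h1 : i ≠ j → (H i ∩ H j).ncard + r ≤ rr i + rr j) (hIr : I.ncard < r)
    (hi : (I ∩ H i).ncard = rr i) (hj : (I ∩ H j).ncard = rr j) : i = j := by
  by_contra hij
  have := ncard_inter_add_ncard_inter_le hI hHij
  have := h1 hij
  omega

theorem SplitIndep.exists_insert_of_ncard_lt (hS : S.Finite) (hH : ∀ i, H i ⊆ S)
    (h1 : ∀ i j, i ≠ j → (H i ∩ H j).ncard + r ≤ rr i + rr j)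
    (hI : SplitIndep S H r rr I) (hJ : SplitIndep S H r rr J) (hIJ : I.ncard < J.ncard) :
    ∃ e ∈ J, e ∉ I ∧ SplitIndep S H r rr (insert e I) := by
  by_contra! hcon
  have hIfin : I.Finite := hS.subset hI.1
  have hIr : I.ncard < r := hIJ.trans_le hJ.2.1
  have hblock : ∀ e ∈ J \ I, ∃ i, e ∈ H i ∧ (I ∩ H i).ncard = rr i := fun e he ↦
    hI.exists_ncard_inter_eq_of_not_insert hS (hJ.1 he.1) he.2 hIr (hcon e he.1 he.2)
  obtain ⟨e₀, he₀J, he₀I⟩ := exists_mem_notMem_of_ncard_lt_ncard hIJ hIfin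
  obtain ⟨i₀, -, hi₀⟩ := hblock e₀ ⟨he₀J, he₀I⟩
  have hJI : J \ I ⊆ H i₀ := fun e he ↦ by
    obtain ⟨i, hei, hi⟩ := hblock e he
    rwa [eq_of_ncard_inter_eq_of_ncard_lt hIfin ((hS.subset (hH i)).inter_of_left _)
      (h1 i i₀) hIr hi hi₀] at hei
  have := ncard_inter_lt_ncard_inter_of_diff_subset hIfin (hS.subset hJ.1) hIJ hJI
  have := hJ.2.2 i₀
  omega

def splitIndepMatroid (hS : S.Finite) (hH : ∀ i, H i ⊆ S)
    (h1 : ∀ i j, i ≠ j → (H i ∩ H j).ncard + r ≤ rr i + rr j) : IndepMatroid α :=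
  IndepMatroid.ofFinite hS (SplitIndep S H r rr) splitIndep_empty
    (fun _ _ hJ hIJ ↦ hJ.subset hS hIJ)
    (fun _ _ hI hJ hIJ ↦ hI.exists_insert_of_ncard_lt hS hH h1 hJ hIJ)
    (fun _ hI ↦ hI.1)

end ElementarySplit

theorem stmt0_general {α : Type*} (S : Set α) (hSfin : S.Finite) (q r : ℕ)
    (H : Fin q → Set α) (rr : Fin q → ℕ)
    (hH : ∀ i, H i ⊆ S)
    (h1 : ∀ i j : Fin q, i ≠ j → (H i ∩ H j).ncard + r ≤ rr i + rr j) :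
    ∃ M : Matroid α, M.E = S ∧
      ∀ X, X ⊆ S → (M.Indep X ↔ X.ncard ≤ r ∧ ∀ i, (X ∩ H i).ncard ≤ rr i) :=
  ⟨(splitIndepMatroid hSfin hH h1).matroid, rfl, fun _ hX ↦ and_iff_right hX⟩

theorem stmt0 {α : Type*} (S : Set α) (hSfin : S.Finite) (q r : ℕ)
    (H : Fin q → Set α) (rr : Fin q → ℕ)
    (hH : ∀ i, H i ⊆ S) (hrS : r ≤ S.ncard)
    (h1 : ∀ i j : Fin q, i ≠ j → (H i ∩ H j).ncard + r ≤ rr i + rr j) :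
    ∃ M : Matroid α, M.E = S ∧
      ∀ X, X ⊆ S → (M.Indep X ↔ X.ncard ≤ r ∧ ∀ i, (X ∩ H i).ncard ≤ rr i) :=
  stmt0_general S hSfin q r H rr hH h1
end

section
/- Under the hypotheses |S| ≥ r and |H_i ∩ H_j| ≤ r_i + r_j − r for all i < j, the matroid with independent sets I = {X ⊆ S : |X| ≤ r, |X ∩ H_i| ≤ r_i for all i} has rank function r_M(Z) = min{ r, |Z|, min_{1≤i≤q} (|Z − H_i| + r_i) } for every Z ⊆ S. -/
open Matroid Set

variable {α : Type*}

/-!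
An independent `I ⊆ Z` has `|I| = |I \ H i| + |I ∩ H i| ≤ |Z \ H i| + r i`, which gives `≤`.
Conversely, let `I` be a basis of `Z` with `|I| < r` and `|I| < |Z|`. An element `e ∈ Z \ I` can
only be blocked by a hyperedge `H i ∋ e` that `I` fills, `|I ∩ H i| = r i`; two filled hyperedges
would give `r i + r j ≤ |I| + |H i ∩ H j| < r + |H i ∩ H j| ≤ r i + r j`. Hence one `H i` contains
`Z \ I`, and `|I| = |I \ H i| + r i ≥ |Z \ H i| + r i`.
-/

lemma mrk_eq_ncard_of_isBasis {M : Matroid α} {I Z : Set α} (hI : M.IsBasis I Z) (hZ : Z.Finite) :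
    mrk M Z = I.ncard := by
  refine IsGreatest.csSup_eq ⟨⟨I, hI.indep, hI.subset, rfl⟩, ?_⟩
  rintro n ⟨J, hJ, hJZ, rfl⟩
  rw [← Nat.cast_le (α := ℕ∞), (hZ.subset hJZ).cast_ncard_eq, (hZ.subset hI.subset).cast_ncard_eq,
    hI.encard_eq_eRk]
  exact hJ.encard_le_eRk_of_subset hJZ

section SplitPresentation

variable {ι : Type*} {M : Matroid α} [M.Finite] {r : ℕ} {H : ι → Set α} {rr : ι → ℕ}
  {I Z : Set α}

lemma ncard_le_ncard_sdiff_add_of_indep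
    (hM : ∀ X ⊆ M.E, M.Indep X ↔ X.ncard ≤ r ∧ ∀ i, (X ∩ H i).ncard ≤ rr i)
    (hI : M.Indep I) (hIZ : I ⊆ Z) (hZ : Z ⊆ M.E) (i : ι) :
    I.ncard ≤ (Z \ H i).ncard + rr i := by
  have hsplit := ncard_inter_add_ncard_sdiff_eq_ncard I (H i) (M.set_finite I hI.subset_ground)
  have hdiff : (I \ H i).ncard ≤ (Z \ H i).ncard :=
    ncard_le_ncard (sdiff_subset_sdiff_left hIZ) (M.set_finite Z hZ).sdiff
  have hcap := ((hM I hI.subset_ground).mp hI).2 i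
  omega

lemma exists_ncard_inter_eq_of_not_indep_insert
    (hM : ∀ X ⊆ M.E, M.Indep X ↔ X.ncard ≤ r ∧ ∀ i, (X ∩ H i).ncard ≤ rr i)
    {e : α} (hI : M.Indep I) (heE : e ∈ M.E) (heI : e ∉ I) (hdep : ¬ M.Indep (insert e I))
    (hIr : I.ncard < r) :
    ∃ i, e ∈ H i ∧ (I ∩ H i).ncard = rr i := by
  have hIfin := M.set_finite I hI.subset_ground
  rw [hM _ (insert_subset heE hI.subset_ground), ncard_insert_of_notMem heI hIfin] at hdep
  push Not at hdep
  obtain ⟨i, hi⟩ := hdep hIr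
  have hcap := ((hM I hI.subset_ground).mp hI).2 i
  by_cases heH : e ∈ H i
  · rw [insert_inter_of_mem heH, ncard_insert_of_notMem (fun h ↦ heI h.1) (hIfin.inter_of_left _)]
      at hi
    exact ⟨i, heH, by omega⟩
  · rw [insert_inter_of_notMem heH] at hi
    omega

lemma eq_of_ncard_inter_eq_of_ncard_inter_eq
    (hH₁ : ∀ i j, i ≠ j → (H i ∩ H j).ncard + r ≤ rr i + rr j) (hIfin : I.Finite)
    (hIr : I.ncard < r) {i j : ι} (hHij : (H i ∩ H j).Finite) (hi : (I ∩ H i).ncard = rr i)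
    (hj : (I ∩ H j).ncard = rr j) :
    i = j := by
  by_contra hij
  have hunion := ncard_union_add_ncard_inter (I ∩ H i) (I ∩ H j)
    (hIfin.inter_of_left _) (hIfin.inter_of_left _)
  have hcup : (I ∩ H i ∪ I ∩ H j).ncard ≤ I.ncard :=
    ncard_le_ncard (union_subset inter_subset_left inter_subset_left) hIfin
  have hcap : (I ∩ H i ∩ (I ∩ H j)).ncard ≤ (H i ∩ H j).ncard :=
    ncard_le_ncard (fun x hx ↦ ⟨hx.1.2, hx.2.2⟩) hHij
  have := hH₁ i j hij
  omega

lemma Matroid.IsBasis.exists_ncard_sdiff_add_le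
    (hM : ∀ X ⊆ M.E, M.Indep X ↔ X.ncard ≤ r ∧ ∀ i, (X ∩ H i).ncard ≤ rr i)
    (hH : ∀ i, H i ⊆ M.E) (hH₁ : ∀ i j, i ≠ j → (H i ∩ H j).ncard + r ≤ rr i + rr j)
    (hI : M.IsBasis I Z) (hIr : I.ncard < r) (hIZ : I.ncard < Z.ncard) :
    ∃ i, (Z \ H i).ncard + rr i ≤ I.ncard := by
  have hIfin := M.set_finite I hI.indep.subset_ground
  have hfull : ∀ e ∈ Z \ I, ∃ i, e ∈ H i ∧ (I ∩ H i).ncard = rr i := fun e he ↦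
    exists_ncard_inter_eq_of_not_indep_insert hM hI.indep (hI.subset_ground he.1) he.2
      (hI.insert_dep he).not_indep hIr
  obtain ⟨e, he⟩ := sdiff_nonempty_of_ncard_lt_ncard hIZ hIfin
  obtain ⟨i, -, hi⟩ := hfull e he
  have hZI : Z \ H i ⊆ I \ H i := by
    rintro x ⟨hxZ, hxH⟩
    refine ⟨by_contra fun hxI ↦ ?_, hxH⟩
    obtain ⟨j, hxj, hj⟩ := hfull x ⟨hxZ, hxI⟩
    have hHij := (M.set_finite (H i) (hH i)).inter_of_left (H j)
    exact hxH (eq_of_ncard_inter_eq_of_ncard_inter_eq hH₁ hIfin hIr hHij hi hj ▸ hxj)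
  have hsplit := ncard_inter_add_ncard_sdiff_eq_ncard I (H i) hIfin
  have := ncard_le_ncard hZI hIfin.sdiff
  exact ⟨i, by omega⟩

end SplitPresentation

theorem stmt1_general {α : Type*} (S : Set α) (hSfin : S.Finite) (q r : ℕ)
    (H : Fin q → Set α) (rr : Fin q → ℕ)
    (hH : ∀ i, H i ⊆ S)
    (h1 : ∀ i j : Fin q, i ≠ j → (H i ∩ H j).ncard + r ≤ rr i + rr j)
    (M : Matroid α) (hME : M.E = S)
    (hMI : ∀ X, X ⊆ S → (M.Indep X ↔ X.ncard ≤ r ∧ ∀ i, (X ∩ H i).ncard ≤ rr i)) :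
    ∀ Z, Z ⊆ S → (mrk M Z : ℕ∞) =
      min (min (r : ℕ∞) (Z.ncard : ℕ∞))
        ((Finset.univ : Finset (Fin q)).inf fun i => (((Z \ H i).ncard + rr i : ℕ) : ℕ∞)) := by
  intro Z hZ
  subst hME
  have : M.Finite := ⟨hSfin⟩
  obtain ⟨I, hI⟩ := M.exists_isBasis Z hZ
  rw [mrk_eq_ncard_of_isBasis hI (hSfin.subset hZ)]
  apply le_antisymm
  · have hIr := ((hMI I hI.indep.subset_ground).mp hI.indep).1
    have hIZ := ncard_le_ncard hI.subset (hSfin.subset hZ)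
    refine le_min (le_min (by exact_mod_cast hIr) (by exact_mod_cast hIZ))
      (Finset.le_inf fun i _ ↦ ?_)
    exact_mod_cast ncard_le_ncard_sdiff_add_of_indep hMI hI.indep hI.subset hZ i
  · refine not_lt.mp fun hlt ↦ ?_
    simp only [lt_min_iff, Nat.cast_lt] at hlt
    obtain ⟨⟨hIr, hIZ⟩, hIH⟩ := hlt
    obtain ⟨i, hi⟩ := hI.exists_ncard_sdiff_add_le hMI hH h1 hIr hIZ
    exact (hIH.trans_le (Finset.inf_le (Finset.mem_univ i))).not_ge (by exact_mod_cast hi)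

theorem stmt1 {α : Type*} (S : Set α) (hSfin : S.Finite) (q r : ℕ)
    (H : Fin q → Set α) (rr : Fin q → ℕ)
    (hH : ∀ i, H i ⊆ S) (hrS : r ≤ S.ncard)
    (h1 : ∀ i j : Fin q, i ≠ j → (H i ∩ H j).ncard + r ≤ rr i + rr j)
    (M : Matroid α) (hME : M.E = S)
    (hMI : ∀ X, X ⊆ S → (M.Indep X ↔ X.ncard ≤ r ∧ ∀ i, (X ∩ H i).ncard ≤ rr i)) :
    ∀ Z, Z ⊆ S → (mrk M Z : ℕ∞) =
      min (min (r : ℕ∞) (Z.ncard : ℕ∞))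
        ((Finset.univ : Finset (Fin q)).inf fun i => (((Z \ H i).ncard + rr i : ℕ) : ℕ∞)) :=
  stmt1_general S hSfin q r H rr hH h1 M hME hMI
end

section
/- Under the hypotheses |S| ≥ r, |H_i ∩ H_j| ≤ r_i + r_j − r for all i < j, and |S − H_i| + r_i ≥ r for all i, the matroid with independent sets {X ⊆ S : |X| ≤ r, |X ∩ H_i| ≤ r_i for all i} has rank exactly r. -/
open Matroid Set

variable {α : Type*}

/-!
A base `B` of `M` has size at most `r`; suppose `|B| < r`. If no constraint is tight at `B`,
any element of `S \ B` (which exists as `|S| ≥ r`) can be added. If `|B ∩ H i| = r i`, then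
(H2) gives `|B \ H i| < |S \ H i|`, so some `e ∈ S \ (B ∪ H i)` exists; adding it keeps
`|B ∩ H i|` fixed, and (H1) shows that no other constraint `j` is tight, since
`|B ∩ H i| + |B ∩ H j| ≤ |B| + |H i ∩ H j| < r i + r j`. Either way `B` is not maximal.
-/

lemma mrk_eq_ncard_of_forall_indep_ncard_le {M : Matroid α} {I Z : Set α}
    (hI : M.Indep I) (hIZ : I ⊆ Z) (hle : ∀ J, M.Indep J → J ⊆ Z → J.ncard ≤ I.ncard) :
    mrk M Z = I.ncard := by
  have hub : ∀ n ∈ {n | ∃ J, M.Indep J ∧ J ⊆ Z ∧ J.ncard = n}, n ≤ I.ncard := by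
    rintro n ⟨J, hJ, hJZ, rfl⟩
    exact hle J hJ hJZ
  exact le_antisymm (csSup_le ⟨_, I, hI, hIZ, rfl⟩ hub) (le_csSup ⟨_, hub⟩ ⟨I, hI, hIZ, rfl⟩)

namespace Set

variable {B H K : Set α}

lemma ncard_inter_add_ncard_inter_le_s2 (hB : B.Finite) (hHK : (H ∩ K).Finite) :
    (B ∩ H).ncard + (B ∩ K).ncard ≤ B.ncard + (H ∩ K).ncard := by
  rw [← ncard_union_add_ncard_inter _ _ (hB.inter_of_left _) (hB.inter_of_left _)]
  exact add_le_add (ncard_le_ncard (union_subset inter_subset_left inter_subset_left) hB)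
    (ncard_le_ncard (fun x hx => ⟨hx.1.2, hx.2.2⟩) hHK)

lemma ncard_insert_inter_le_of_lt {k : ℕ} (e : α) (hB : B.Finite) (h : (B ∩ H).ncard < k) :
    (insert e B ∩ H).ncard ≤ k := by
  have hsub : insert e B ∩ H ⊆ insert e (B ∩ H) := by
    rw [insert_inter_distrib]
    exact inter_subset_inter_right _ (subset_insert e H)
  calc (insert e B ∩ H).ncard ≤ (insert e (B ∩ H)).ncard :=
        ncard_le_ncard hsub ((hB.inter_of_left H).insert e)
    _ ≤ (B ∩ H).ncard + 1 := ncard_insert_le _ _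
    _ ≤ k := h

end Set

lemma exists_insert_of_ncard_lt {S B : Set α} (hSfin : S.Finite) {q r : ℕ}
    {H : Fin q → Set α} {rr : Fin q → ℕ} (hH : ∀ i, H i ⊆ S) (hrS : r ≤ S.ncard)
    (h1 : ∀ i j : Fin q, i ≠ j → (H i ∩ H j).ncard + r ≤ rr i + rr j)
    (h2 : ∀ i, r ≤ (S \ H i).ncard + rr i)
    (hBS : B ⊆ S) (hBr : B.ncard < r) (hBH : ∀ i, (B ∩ H i).ncard ≤ rr i) :
    ∃ e ∈ S, e ∉ B ∧ (insert e B).ncard ≤ r ∧ ∀ i, (insert e B ∩ H i).ncard ≤ rr i := by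
  have hBfin : B.Finite := hSfin.subset hBS
  suffices ∃ e ∈ S, e ∉ B ∧ ∀ i, e ∈ H i → (B ∩ H i).ncard < rr i by
    obtain ⟨e, heS, heB, hgood⟩ := this
    refine ⟨e, heS, heB, by rw [ncard_insert_of_notMem heB hBfin]; omega, fun i => ?_⟩
    by_cases heH : e ∈ H i
    · exact ncard_insert_inter_le_of_lt e hBfin (hgood i heH)
    · rw [insert_inter_of_notMem heH]
      exact hBH i
  by_cases htight : ∃ i, rr i ≤ (B ∩ H i).ncard
  · obtain ⟨i, hi⟩ := htight
    have hdiff : (B \ H i).ncard < (S \ H i).ncard := by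
      have hsplit := ncard_inter_add_ncard_sdiff_eq_ncard B (H i) hBfin
      have hroom := h2 i
      omega
    obtain ⟨e, ⟨heS, heHi⟩, heB⟩ := exists_mem_notMem_of_ncard_lt_ncard hdiff hBfin.sdiff
    refine ⟨e, heS, fun h => heB ⟨h, heHi⟩, fun j heHj => ?_⟩
    have hij : i ≠ j := by rintro rfl; exact heHi heHj
    have hoverlap := ncard_inter_add_ncard_inter_le_s2 (H := H i) (K := H j) hBfin
      (hSfin.subset (inter_subset_left.trans (hH i)))
    have hpair := h1 i j hij
    omega
  · push Not at htight
    obtain ⟨e, heS, heB⟩ := exists_mem_notMem_of_ncard_lt_ncard (hBr.trans_le hrS) hBfin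
    exact ⟨e, heS, heB, fun i _ => htight i⟩

theorem stmt2 {α : Type*} (S : Set α) (hSfin : S.Finite) (q r : ℕ)
    (H : Fin q → Set α) (rr : Fin q → ℕ)
    (hH : ∀ i, H i ⊆ S) (hrS : r ≤ S.ncard)
    (h1 : ∀ i j : Fin q, i ≠ j → (H i ∩ H j).ncard + r ≤ rr i + rr j)
    (h2 : ∀ i, r ≤ (S \ H i).ncard + rr i)
    (M : Matroid α) (hME : M.E = S)
    (hMI : ∀ X, X ⊆ S → (M.Indep X ↔ X.ncard ≤ r ∧ ∀ i, (X ∩ H i).ncard ≤ rr i)) :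
    mrk M S = r := by
  obtain ⟨B, hB⟩ := M.exists_isBase
  have hBS : B ⊆ S := hME ▸ hB.subset_ground
  have hBr : B.ncard = r := by
    obtain ⟨hBr, hBH⟩ := (hMI B hBS).1 hB.indep
    refine hBr.eq_or_lt.resolve_right fun hlt => ?_
    obtain ⟨e, heS, heB, hcard, hinter⟩ :=
      exists_insert_of_ncard_lt hSfin hH hrS h1 h2 hBS hlt hBH
    exact (hB.insert_dep ⟨hME ▸ heS, heB⟩).not_indep
      ((hMI _ (insert_subset heS hBS)).2 ⟨hcard, hinter⟩)
  rw [← hBr]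
  exact mrk_eq_ncard_of_forall_indep_ncard_le hB.indep hBS fun J hJ hJS =>
    hBr ▸ ((hMI J hJS).1 hJ).1
end

section
/- The class of elementary split matroids is closed under k-truncation: if M is an elementary split matroid of rank r and 0 ≤ k < r, then the k-truncation of M is also an elementary split matroid. -/
open Matroid Set

variable {α : Type*}

/-! The `k`-truncation of an elementary split matroid with data `(H i, r i)` and rank bound `r`
is described by rank bound `k` and the hyperedges `H i` with `r i < k`; a hyperedge with
`k ≤ r i` imposes nothing on a set of size at most `k`, so it is replaced by the empty set. -/

lemma mrk_le_of_forall_indep {M : Matroid α} {Z : Set α} {r : ℕ}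
    (h : ∀ I, M.Indep I → I ⊆ Z → I.ncard ≤ r) : mrk M Z ≤ r :=
  csSup_le' fun _ ⟨I, hI, hIZ, hn⟩ => hn ▸ h I hI hIZ

section Truncation

variable {q : ℕ} (H : Fin q → Set α) (rr : Fin q → ℕ) (k : ℕ)

def truncHyperedges : Fin q → Set α := fun i => if rr i < k then H i else ∅

variable {H rr k}

lemma truncHyperedges_subset (i : Fin q) : truncHyperedges H rr k i ⊆ H i := by
  unfold truncHyperedges
  split_ifs
  exacts [subset_rfl, empty_subset _]

lemma ncard_inter_truncHyperedges_add_le {r : ℕ} (hkr : k ≤ r) {i j : Fin q}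
    (hij : (H i ∩ H j).ncard + r ≤ rr i + rr j) :
    (truncHyperedges H rr k i ∩ truncHyperedges H rr k j).ncard + k ≤
      min (rr i) k + min (rr j) k := by
  unfold truncHyperedges
  split_ifs <;> (try simp only [inter_empty, empty_inter, ncard_empty]) <;> omega

lemma ncard_inter_truncHyperedges_le_iff {X : Set α} (hX : X.Finite) (hXk : X.ncard ≤ k)
    (i : Fin q) :
    (X ∩ truncHyperedges H rr k i).ncard ≤ min (rr i) k ↔ (X ∩ H i).ncard ≤ rr i := by
  unfold truncHyperedges
  by_cases hi : rr i < k
  · simp only [hi, if_true, min_eq_left hi.le]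
  · have hXi : (X ∩ H i).ncard ≤ X.ncard := ncard_inter_le_ncard_left _ _ hX
    simp only [hi, if_false, inter_empty, ncard_empty, zero_le, true_iff]
    omega

end Truncation

theorem stmt3 {α : Type*} (M N : Matroid α) (hM : IsElemSplit M) (k : ℕ)
    (hk : k < mrk M M.E) (hNE : N.E = M.E)
    (hNI : ∀ X, X ⊆ M.E → (N.Indep X ↔ M.Indep X ∧ X.ncard ≤ k)) :
    IsElemSplit N := by
  obtain ⟨q, H, r, rr, hfin, hr, hH, hH1, hMI⟩ := hM
  have hkr : k ≤ r :=
    hk.le.trans (mrk_le_of_forall_indep fun I hI _ => ((hMI I hI.subset_ground).mp hI).1)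
  refine ⟨q, truncHyperedges H rr k, k, fun i => min (rr i) k, hNE ▸ hfin,
    hNE ▸ hkr.trans hr, fun i => hNE ▸ (truncHyperedges_subset i).trans (hH i),
    fun i j hij => ncard_inter_truncHyperedges_add_le hkr (hH1 i j hij), fun X hX => ?_⟩
  rw [hNE] at hX
  rw [hNI X hX, hMI X hX]
  constructor
  · rintro ⟨⟨-, hXH⟩, hXk⟩
    exact ⟨hXk, fun i => (ncard_inter_truncHyperedges_le_iff (hfin.subset hX) hXk i).mpr (hXH i)⟩
  · rintro ⟨hXk, hXH⟩
    exact ⟨⟨hXk.trans hkr,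
      fun i => (ncard_inter_truncHyperedges_le_iff (hfin.subset hX) hXk i).mp (hXH i)⟩, hXk⟩
end

section
/- The class of elementary split matroids is closed under deletion: if M is an elementary split matroid on S and Z ⊆ S, then M \ Z (the restriction of M to S − Z) is an elementary split matroid. -/
open Matroid Set

variable {α : Type*}

/-! Restricting an elementary split matroid to `R ⊆ S` is presented by the hyperedges `H i ∩ R`
with the same `r i` and the rank `min r |R|`; condition (H1) survives because its left-hand
side can only shrink. -/

theorem IsElemSplit.restrict {M : Matroid α} (hM : IsElemSplit M) {R : Set α}
    (hR : R ⊆ M.E) : IsElemSplit (M ↾ R) := by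
  obtain ⟨q, H, r, rr, hfin, -, hHE, hH, hind⟩ := hM
  have hRfin : R.Finite := hfin.subset hR
  refine ⟨q, fun i ↦ H i ∩ R, min r R.ncard, rr, hRfin, min_le_right _ _,
    fun _ ↦ inter_subset_right, fun i j hij ↦ ?_, fun X hX ↦ ?_⟩
  · have hsub : H i ∩ R ∩ (H j ∩ R) ⊆ H i ∩ H j := fun _ hx ↦ ⟨hx.1.1, hx.2.1⟩
    calc (H i ∩ R ∩ (H j ∩ R)).ncard + min r R.ncard
        ≤ (H i ∩ H j).ncard + r :=
          add_le_add (ncard_le_ncard hsub (hfin.subset (inter_subset_left.trans (hHE i))))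
            (min_le_left _ _)
      _ ≤ rr i + rr j := hH i j hij
  · have hXR : X ⊆ R := hX
    have hXH : ∀ i, X ∩ (H i ∩ R) = X ∩ H i := fun i ↦ by
      rw [inter_comm (H i), ← inter_assoc, inter_eq_left.2 hXR]
    simp only [restrict_indep_iff, hind X (hXR.trans hR), hXH, le_min_iff,
      ncard_le_ncard hXR hRfin, hXR, and_true]

theorem stmt4 {α : Type*} (M : Matroid α) (hM : IsElemSplit M) (Z : Set α) :
    IsElemSplit (mdelete M Z) :=
  hM.restrict sdiff_subset
end

section
/- The class of elementary split matroids is closed under contraction, and hence under taking minors. -/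
open Matroid Set

variable {α : Type*}

/-! If `B` is a basis of `C`, then `X` is independent in `M ／ C` exactly when `X ∪ B` is
independent in `M`. Hence `M ／ C` is elementary split with the same hyperedges (cut down to the
new ground set), rank `r - |B|` and hyperedge ranks `rᵢ - |B ∩ Hᵢ|`; condition (H1) survives
because `|B ∩ Hᵢ| + |B ∩ Hⱼ| ≤ |B| + |Hᵢ ∩ Hⱼ ∩ C|`. Deletion only cuts down the hyperedges. -/

lemma Set.ncard_inter_add_ncard_inter_le_s6 {B : Set α} (hB : B.Finite) (S T : Set α) :
    (B ∩ S).ncard + (B ∩ T).ncard ≤ B.ncard + (B ∩ (S ∩ T)).ncard := by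
  rw [← ncard_inter_add_ncard_union _ _ (hB.subset inter_subset_left)
    (hB.subset inter_subset_left), ← inter_inter_distrib_left, ← inter_union_distrib_left,
    add_comm]
  exact Nat.add_le_add_right (ncard_le_ncard inter_subset_left hB) _

lemma isElemSplit_of_indep_iff {N : Matroid α} {q : ℕ} (H : Fin q → Set α) (r : ℕ)
    (rr : Fin q → ℕ) (hE : N.E.Finite)
    (hH : ∀ i j, i ≠ j → (H i ∩ H j ∩ N.E).ncard + r ≤ rr i + rr j)
    (hindep : ∀ X ⊆ N.E, N.Indep X ↔ X.ncard ≤ r ∧ ∀ i, (X ∩ H i).ncard ≤ rr i) :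
    IsElemSplit N := by
  refine ⟨q, fun i => H i ∩ N.E, min r N.E.ncard, rr, hE, min_le_right _ _,
    fun _ => inter_subset_right, fun i j hij => ?_, fun X hX => ?_⟩
  · rw [← inter_inter_distrib_right]
    exact (Nat.add_le_add_left (min_le_left _ _) _).trans (hH i j hij)
  · have hXH : ∀ i, X ∩ (H i ∩ N.E) = X ∩ H i := fun i => by
      rw [← inter_assoc, inter_right_comm, inter_eq_left.2 hX]
    simp only [hindep X hX, hXH, le_min_iff, and_iff_left (ncard_le_ncard hX hE)]

lemma IsElemSplit.delete {M : Matroid α} (h : IsElemSplit M) (D : Set α) :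
    IsElemSplit (M ＼ D) := by
  obtain ⟨q, H, r, rr, hE, -, hHE, hH, hindep⟩ := h
  refine isElemSplit_of_indep_iff H r rr (hE.subset sdiff_subset) (fun i j hij => ?_)
    fun X hX => ?_
  · have hHij : (H i ∩ H j).Finite := hE.subset (inter_subset_left.trans (hHE i))
    exact (Nat.add_le_add_right (ncard_le_ncard inter_subset_left hHij) r).trans (hH i j hij)
  · obtain ⟨hXE, hXD⟩ := subset_sdiff.1 hX
    rw [delete_indep_iff, and_iff_left hXD, hindep X hXE]

lemma IsElemSplit.contract {M : Matroid α} (h : IsElemSplit M) (C : Set α) :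
    IsElemSplit (M ／ C) := by
  obtain ⟨q, H, r, rr, hE, -, hHE, hH, hindep⟩ := h
  obtain ⟨B, hB⟩ := M.exists_isBasis' C
  have hBE : B ⊆ M.E := hB.indep.subset_ground
  have hBfin : B.Finite := hE.subset hBE
  obtain ⟨hBr, hBrr⟩ := (hindep B hBE).1 hB.indep
  refine isElemSplit_of_indep_iff H (r - B.ncard) (fun i => rr i - (B ∩ H i).ncard)
    (hE.subset sdiff_subset) (fun i j hij => ?_) fun X hX => ?_
  · have hHij : (H i ∩ H j).Finite := hE.subset (inter_subset_left.trans (hHE i))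
    have hsplit := ncard_inter_add_ncard_sdiff_eq_ncard (H i ∩ H j) C hHij
    have hrest : (H i ∩ H j ∩ (M.E \ C)).ncard ≤ ((H i ∩ H j) \ C).ncard :=
      ncard_le_ncard (fun x hx => ⟨hx.1, hx.2.2⟩) (hHij.subset sdiff_subset)
    have hBij := ncard_inter_add_ncard_inter_le_s6 hBfin (H i) (H j)
    have hBC : (B ∩ (H i ∩ H j)).ncard ≤ (H i ∩ H j ∩ C).ncard :=
      ncard_le_ncard (fun x hx => ⟨hx.2, hB.subset hx.1⟩) (hHij.subset inter_subset_left)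
    have hHij_le := hH i j hij
    have hBi := hBrr i
    have hBj := hBrr j
    rw [contract_ground]
    omega
  · obtain ⟨hXE, hXC⟩ := subset_sdiff.1 hX
    have hXB : Disjoint X B := hXC.mono_right hB.subset
    have hcard : ∀ i, ((X ∪ B) ∩ H i).ncard = (X ∩ H i).ncard + (B ∩ H i).ncard := fun i => by
      rw [union_inter_distrib_right]
      exact ncard_union_eq (hXB.mono inter_subset_left inter_subset_left)
        (hE.subset (inter_subset_left.trans hXE)) (hBfin.subset inter_subset_left)
    rw [hB.contract_indep_iff, and_iff_left hXC.symm, hindep _ (union_subset hXE hBE),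
      ncard_union_eq hXB (hE.subset hXE) hBfin]
    simp only [hcard]
    exact and_congr (by omega) (forall_congr' fun i => by have := hBrr i; omega)

theorem stmt6 {α : Type*} :
    (∀ (M : Matroid α) (Z : Set α), IsElemSplit M → IsElemSplit (mcontract M Z)) ∧
    (∀ M N : Matroid α, IsElemSplit M → IsMinorOf N M → IsElemSplit N) := by
  -- `mcontract` and `mdelete` are Mathlib's `／` and `＼` by definition.
  refine ⟨fun M Z h => h.contract Z, ?_⟩
  rintro M N hM ⟨C, D, rfl⟩
  exact (hM.contract C).delete D
end

section
/- If an elementary split matroid M is given by a representation H_1,...,H_q, r, r_1,...,r_q satisfying (H1)–(H4), then the restriction M|H_i is isomorphic to the uniform matroid U_{r_i, |H_i|} for each i. -/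
open Matroid Set

variable {α : Type*}

lemma ncard_inter_le_of_subset_hyperedge {ι : Type*} {H : ι → Set α} {r : ℕ}
    {rr : ι → ℕ} (h1 : ∀ i j, i ≠ j → (H i ∩ H j).ncard + r ≤ rr i + rr j) {i : ι}
    (hi : rr i ≤ r) (hfin : (H i).Finite) {I : Set α} (hI : I ⊆ H i) (hIcard : I.ncard ≤ rr i)
    (j : ι) : (I ∩ H j).ncard ≤ rr j := by
  obtain rfl | hij := eq_or_ne j i
  · rwa [inter_eq_self_of_subset_left hI]
  · have hle : (I ∩ H j).ncard ≤ (H i ∩ H j).ncard :=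
      ncard_le_ncard (inter_subset_inter_left _ hI) (hfin.inter_of_left _)
    have := h1 i j hij.symm
    omega

lemma indep_iff_ncard_le_of_subset_hyperedge {ι : Type*} {M : Matroid α} {H : ι → Set α}
    {r : ℕ} {rr : ι → ℕ}
    (hMI : ∀ X, X ⊆ M.E → (M.Indep X ↔ X.ncard ≤ r ∧ ∀ i, (X ∩ H i).ncard ≤ rr i))
    (h1 : ∀ i j, i ≠ j → (H i ∩ H j).ncard + r ≤ rr i + rr j) {i : ι} (hHi : H i ⊆ M.E)
    (hi : rr i ≤ r) (hfin : (H i).Finite) {I : Set α} (hI : I ⊆ H i) :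
    M.Indep I ↔ I.ncard ≤ rr i := by
  rw [hMI I (hI.trans hHi)]
  refine ⟨fun h ↦ inter_eq_self_of_subset_left hI ▸ h.2 i, fun hIcard ↦ ⟨hIcard.trans hi, ?_⟩⟩
  exact ncard_inter_le_of_subset_hyperedge h1 hi hfin hI hIcard

theorem stmt7_general {α : Type*} (M : Matroid α) (hSfin : M.E.Finite) (q r : ℕ)
    (H : Fin q → Set α) (rr : Fin q → ℕ)
    (hH : ∀ i, H i ⊆ M.E)
    (h1 : ∀ i j : Fin q, i ≠ j → (H i ∩ H j).ncard + r ≤ rr i + rr j)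
    (h3 : ∀ i, rr i + 1 ≤ r)
    (hMI : ∀ X, X ⊆ M.E → (M.Indep X ↔ X.ncard ≤ r ∧ ∀ i, (X ∩ H i).ncard ≤ rr i)) :
    ∀ i, IsUnif (M ↾ (H i)) (rr i) ((H i).ncard) := by
  intro i
  have hfin : (H i).Finite := hSfin.subset (hH i)
  refine ⟨hfin, rfl, fun I hI ↦ ?_⟩
  rw [restrict_indep_iff, and_iff_left (show I ⊆ H i from hI)]
  exact indep_iff_ncard_le_of_subset_hyperedge hMI h1 (hH i) (Nat.le_of_succ_le (h3 i)) hfin hI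

theorem stmt7 {α : Type*} (M : Matroid α) (hSfin : M.E.Finite) (q r : ℕ)
    (H : Fin q → Set α) (rr : Fin q → ℕ)
    (hH : ∀ i, H i ⊆ M.E) (hrS : r ≤ M.E.ncard)
    (h1 : ∀ i j : Fin q, i ≠ j → (H i ∩ H j).ncard + r ≤ rr i + rr j)
    (h2 : ∀ i, r ≤ (M.E \ H i).ncard + rr i)
    (h3 : ∀ i, rr i + 1 ≤ r)
    (h4 : ∀ i, rr i + 1 ≤ (H i).ncard)
    (hMI : ∀ X, X ⊆ M.E → (M.Indep X ↔ X.ncard ≤ r ∧ ∀ i, (X ∩ H i).ncard ≤ rr i)) :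
    ∀ i, IsUnif (M ↾ (H i)) (rr i) ((H i).ncard) :=
  stmt7_general M hSfin q r H rr hH h1 h3 hMI
end

section
/- If an elementary split matroid M is given by a non-redundant representation H_1,...,H_q, r, r_1,...,r_q satisfying (H1)–(H4), then the contraction M/H_i is isomorphic to the uniform matroid U_{r−r_i, |S−H_i|} for each i. -/
open Matroid Set

variable {α : Type*}

/-!
A set `A ⊆ H i` with `|A| = r i` is a basis of `H i`, so `J ⊆ S − H i` is independent in
`M / H i` exactly when `J ∪ A` is independent in `M`. By (H1) the only binding constraint on
`J ∪ A` is its total size `|J| + r i ≤ r`: for `j ≠ i`,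
`|(J ∪ A) ∩ H j| ≤ |H i ∩ H j| + |J| ≤ r i + r j − r + |J| ≤ r j`.
-/

lemma mcontract_eq_contract (M : Matroid α) (C : Set α) : mcontract M C = M ／ C := rfl

lemma isUnif_contract_of_isBasis {M : Matroid α} {A C : Set α} {k : ℕ} (hE : M.E.Finite)
    (hA : M.IsBasis A C) (hindep : ∀ J ⊆ M.E \ C, M.Indep (J ∪ A) ↔ J.ncard ≤ k) :
    IsUnif (M ／ C) k (M.E \ C).ncard :=
  ⟨hE.sdiff, rfl, fun J hJ ↦ by
    rw [hA.contract_indep_iff_of_disjoint (disjoint_sdiff_right.mono_right hJ)]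
    exact hindep J hJ⟩

section ElementarySplit

variable {M : Matroid α} {q r : ℕ} {H : Fin q → Set α} {rr : Fin q → ℕ}

lemma indep_union_of_subset_hyperedge (hE : M.E.Finite) (hH : ∀ i, H i ⊆ M.E)
    (h1 : ∀ i j : Fin q, i ≠ j → (H i ∩ H j).ncard + r ≤ rr i + rr j)
    (hMI : ∀ X, X ⊆ M.E → (M.Indep X ↔ X.ncard ≤ r ∧ ∀ i, (X ∩ H i).ncard ≤ rr i))
    {i : Fin q} {A T : Set α} (hA : A ⊆ H i) (hAcard : A.ncard ≤ rr i) (hT : T ⊆ M.E \ H i)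
    (hTcard : T.ncard + rr i ≤ r) : M.Indep (A ∪ T) := by
  have hTfin : T.Finite := hE.subset (hT.trans sdiff_subset)
  rw [hMI _ (union_subset (hA.trans (hH i)) (hT.trans sdiff_subset))]
  refine ⟨(ncard_union_le A T).trans (by omega), fun j ↦ ?_⟩
  obtain rfl | hij := eq_or_ne i j
  · have hsub : (A ∪ T) ∩ H i ⊆ A := by
      rintro x ⟨hxA | hxT, hxH⟩
      · exact hxA
      · exact absurd hxH (hT hxT).2
    exact (ncard_le_ncard hsub ((hE.subset (hH i)).subset hA)).trans hAcard
  · have hsub : (A ∪ T) ∩ H j ⊆ (H i ∩ H j) ∪ T := by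
      rintro x ⟨hxA | hxT, hxH⟩
      · exact Or.inl ⟨hA hxA, hxH⟩
      · exact Or.inr hxT
    have hHij := h1 i j hij
    calc ((A ∪ T) ∩ H j).ncard
        ≤ ((H i ∩ H j) ∪ T).ncard :=
          ncard_le_ncard hsub (((hE.subset (hH i)).inter_of_left _).union hTfin)
      _ ≤ (H i ∩ H j).ncard + T.ncard := ncard_union_le _ _
      _ ≤ rr j := by omega

lemma isBasis_hyperedge_of_ncard_eq (hE : M.E.Finite) (hH : ∀ i, H i ⊆ M.E)
    (h1 : ∀ i j : Fin q, i ≠ j → (H i ∩ H j).ncard + r ≤ rr i + rr j)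
    (hMI : ∀ X, X ⊆ M.E → (M.Indep X ↔ X.ncard ≤ r ∧ ∀ i, (X ∩ H i).ncard ≤ rr i))
    {i : Fin q} {A : Set α} (hA : A ⊆ H i) (hAcard : A.ncard = rr i) (hri : rr i ≤ r) :
    M.IsBasis A (H i) := by
  have hAindep : M.Indep A := by
    simpa using indep_union_of_subset_hyperedge hE hH h1 hMI hA hAcard.le
      (empty_subset (M.E \ H i)) (by simpa using hri)
  refine hAindep.isBasis_of_maximal_subset hA (fun J hJ hAJ hJH ↦ ?_) (hH i)
  have hJcard : J.ncard ≤ A.ncard := by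
    have := ((hMI J hJ.subset_ground).1 hJ).2 i
    rwa [inter_eq_left.2 hJH, ← hAcard] at this
  exact (eq_of_subset_of_ncard_le hAJ hJcard (hE.subset hJ.subset_ground)).symm.subset

lemma indep_union_iff_of_isBasis_hyperedge (hE : M.E.Finite) (hH : ∀ i, H i ⊆ M.E)
    (h1 : ∀ i j : Fin q, i ≠ j → (H i ∩ H j).ncard + r ≤ rr i + rr j)
    (hMI : ∀ X, X ⊆ M.E → (M.Indep X ↔ X.ncard ≤ r ∧ ∀ i, (X ∩ H i).ncard ≤ rr i))
    {i : Fin q} {A J : Set α} (hA : A ⊆ H i) (hAcard : A.ncard = rr i) (hri : rr i ≤ r)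
    (hJ : J ⊆ M.E \ H i) : M.Indep (J ∪ A) ↔ J.ncard ≤ r - rr i := by
  have hdisj : Disjoint J A := disjoint_sdiff_left.mono hJ hA
  constructor
  · intro hJA
    have hsize := ((hMI _ hJA.subset_ground).1 hJA).1
    rw [ncard_union_eq hdisj (hE.subset (hJ.trans sdiff_subset))
      (hE.subset (hA.trans (hH i)))] at hsize
    omega
  · intro hJcard
    rw [union_comm]
    exact indep_union_of_subset_hyperedge hE hH h1 hMI hA hAcard.le hJ (by omega)

end ElementarySplit

theorem stmt8_general {α : Type*} (M : Matroid α) (hSfin : M.E.Finite) (q r : ℕ)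
    (H : Fin q → Set α) (rr : Fin q → ℕ)
    (hH : ∀ i, H i ⊆ M.E)
    (h1 : ∀ i j : Fin q, i ≠ j → (H i ∩ H j).ncard + r ≤ rr i + rr j)
    (h3 : ∀ i, rr i + 1 ≤ r)
    (h4 : ∀ i, rr i + 1 ≤ (H i).ncard)
    (hMI : ∀ X, X ⊆ M.E → (M.Indep X ↔ X.ncard ≤ r ∧ ∀ i, (X ∩ H i).ncard ≤ rr i)) :
    ∀ i, IsUnif (mcontract M (H i)) (r - rr i) ((M.E \ H i).ncard) := by
  intro i
  have hri : rr i ≤ r := Nat.le_of_succ_le (h3 i)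
  obtain ⟨A, hAH, hAcard⟩ := exists_subset_card_eq (Nat.le_of_succ_le (h4 i))
  rw [mcontract_eq_contract]
  exact isUnif_contract_of_isBasis hSfin
    (isBasis_hyperedge_of_ncard_eq hSfin hH h1 hMI hAH hAcard hri)
    fun J hJ ↦ indep_union_iff_of_isBasis_hyperedge hSfin hH h1 hMI hAH hAcard hri hJ

theorem stmt8 {α : Type*} (M : Matroid α) (hSfin : M.E.Finite) (q r : ℕ)
    (H : Fin q → Set α) (rr : Fin q → ℕ)
    (hH : ∀ i, H i ⊆ M.E) (hrS : r ≤ M.E.ncard)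
    (h1 : ∀ i j : Fin q, i ≠ j → (H i ∩ H j).ncard + r ≤ rr i + rr j)
    (h2 : ∀ i, r ≤ (M.E \ H i).ncard + rr i)
    (h3 : ∀ i, rr i + 1 ≤ r)
    (h4 : ∀ i, rr i + 1 ≤ (H i).ncard)
    (hMI : ∀ X, X ⊆ M.E → (M.Indep X ↔ X.ncard ≤ r ∧ ∀ i, (X ∩ H i).ncard ≤ rr i)) :
    ∀ i, IsUnif (mcontract M (H i)) (r - rr i) ((M.E \ H i).ncard) :=
  stmt8_general M hSfin q r H rr hH h1 h3 h4 hMI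
end

section
/- The matroid U_{0,1} ⊕ U_{1,2} ⊕ U_{1,1} is not an elementary split matroid. -/
open Matroid Set

variable {α : Type*}

/-! A loop `e` of an elementary split matroid lies in a hyperedge `H i` of capacity `rr i = 0`.
Condition (H1) then forces every other hyperedge to have capacity at least `r`, so it cannot
witness the dependence of a set of size at most `r`; such a set must therefore meet `H i`, and
every element of `H i` is a loop. In `U_{0,1} ⊕ U_{1,2} ⊕ U_{1,1}` the parallel pair is a
loopless circuit of size `2 ≤ r`. -/

section Presentation

variable {M : Matroid α} {q r : ℕ} {H : Fin q → Set α} {rr : Fin q → ℕ}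

lemma exists_lt_ncard_inter_of_not_indep
    (hspec : ∀ X, X ⊆ M.E → (M.Indep X ↔ X.ncard ≤ r ∧ ∀ i, (X ∩ H i).ncard ≤ rr i))
    {X : Set α} (hX : X ⊆ M.E) (hdep : ¬ M.Indep X) (hXr : X.ncard ≤ r) :
    ∃ i, rr i < (X ∩ H i).ncard := by
  simpa [hspec X hX, hXr] using hdep

lemma isLoopOf_of_mem_of_capacity_eq_zero
    (hspec : ∀ X, X ⊆ M.E → (M.Indep X ↔ X.ncard ≤ r ∧ ∀ i, (X ∩ H i).ncard ≤ rr i))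
    {x : α} (hxE : x ∈ M.E) {i : Fin q} (hxi : x ∈ H i) (hi : rr i = 0) : IsLoopOf M x := by
  refine ⟨hxE, fun hx => ?_⟩
  have hle := ((hspec {x} (singleton_subset_iff.2 hxE)).1 hx).2 i
  rw [singleton_inter_of_mem hxi, ncard_singleton, hi] at hle
  omega

end Presentation

theorem IsElemSplit.exists_isLoopOf_mem_of_not_indep {M : Matroid α} (hM : IsElemSplit M)
    {e : α} (he : IsLoopOf M e) {X I : Set α} (hX : X ⊆ M.E) (hdep : ¬ M.Indep X)
    (hI : M.Indep I) (hXI : X.ncard ≤ I.ncard) : ∃ x ∈ X, IsLoopOf M x := by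
  obtain ⟨q, H, r, rr, hfin, -, -, hH1, hspec⟩ := hM
  have hXfin : X.Finite := hfin.subset hX
  have hIr : I.ncard ≤ r := ((hspec I hI.subset_ground).1 hI).1
  have hXpos : 0 < X.ncard :=
    (ncard_pos hXfin).2 (nonempty_iff_ne_empty.2 fun h0 => hdep (h0 ▸ M.empty_indep))
  obtain ⟨j, hj⟩ := exists_lt_ncard_inter_of_not_indep hspec hX hdep (hXI.trans hIr)
  obtain ⟨i, hi⟩ := exists_lt_ncard_inter_of_not_indep hspec (singleton_subset_iff.2 he.1) he.2
    (by rw [ncard_singleton]; omega)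
  have heHi : e ∈ H i := by
    by_contra h
    rw [singleton_inter_eq_empty.2 h, ncard_empty] at hi
    omega
  have hrri : rr i = 0 := by
    rw [singleton_inter_of_mem heHi, ncard_singleton] at hi
    omega
  have hjX : (X ∩ H j).ncard ≤ X.ncard := ncard_le_ncard inter_subset_left hXfin
  obtain rfl : i = j := by
    by_contra hij
    have := hH1 i j hij
    omega
  obtain ⟨x, hxX, hxH⟩ := nonempty_of_ncard_ne_zero (by omega : (X ∩ H i).ncard ≠ 0)
  exact ⟨x, hxX, isLoopOf_of_mem_of_capacity_eq_zero hspec (hX hxX) hxH hrri⟩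

theorem stmt10 {α : Type*} (M : Matroid α) (h : IsU01U12U11 M) : ¬ IsElemSplit M := by
  obtain ⟨a, b, c, d, hnd, hE, hInd⟩ := h
  simp only [List.nodup_cons, List.mem_cons, List.not_mem_nil, List.nodup_nil, or_false, not_or,
    not_false_eq_true, and_true] at hnd
  obtain ⟨⟨hab, hac, had⟩, ⟨hbc, hbd⟩, hcd⟩ := hnd
  have hindep : ∀ X ⊆ ({a, b, c, d} : Set α), M.Indep X ↔ a ∉ X ∧ ¬ ({b, c} : Set α) ⊆ X :=
    fun X hX => hInd X (hE ▸ hX)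
  have ha : IsLoopOf M a := ⟨by simp [hE], by simp [hindep]⟩
  have hb : M.Indep {b} := by rw [hindep _ (by grind)]; grind
  have hc : M.Indep {c} := by rw [hindep _ (by grind)]; grind
  have hbc_dep : ¬ M.Indep {b, c} := by rw [hindep _ (by grind)]; simp
  have hbd_indep : M.Indep {b, d} := by rw [hindep _ (by grind)]; grind
  intro hM
  obtain ⟨x, hx, -, hxdep⟩ := hM.exists_isLoopOf_mem_of_not_indep ha (hE ▸ by grind) hbc_dep
    hbd_indep (by rw [ncard_pair hbc, ncard_pair hbd])
  rcases hx with rfl | rfl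
  exacts [hxdep hb, hxdep hc]
end

section
/- If a matroid M has no minor isomorphic to U_{0,1} ⊕ U_{1,2} ⊕ U_{1,1} and has two proper cyclic flats X ⊊ Y, then a contradiction follows; i.e., in a U_{0,1} ⊕ U_{1,2} ⊕ U_{1,1}-minor-free matroid that is loopless and coloopless, the proper cyclic flats form a clutter (an antichain under inclusion). -/
open Matroid Set

variable {α : Type*}

/-!
Suppose `X ⊊ Y` are proper cyclic flats. As `X` is a flat, a basis `I` of `X` extends to a basis
`K ∪ {b}` of `Y` with `I ⊆ K`, so that `X ⊆ cl K`. Since `X` is cyclic it is dependent, hence has an element `a ∉ K`;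
since `Y` is cyclic, `b ∈ cl (Y - b)`, so some `c ∈ Y - b` lies outside `cl K`; and since `Y ≠ E`
there is some `d ∉ Y`. In `M ／ K` restricted to `{a, b, c, d}`, `a` is a loop, `b` and `c` are
parallel because `K ∪ {b}` spans `Y`, and `d` is a coloop because `Y` is a flat: this is
`U_{0,1} ⊕ U_{1,2} ⊕ U_{1,1}`.
-/

lemma mrk_empty (M : Matroid α) : mrk M ∅ = 0 := by
  simp [mrk]

variable {M : Matroid α} {X Y Z K : Set α} {a b c d e : α}

lemma isLoopOf_iff_isLoop : IsLoopOf M e ↔ M.IsLoop e := by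
  rw [IsLoopOf, ← singleton_dep, Dep, singleton_subset_iff, and_comm]

lemma isColoopOf_iff_isColoop : IsColoopOf M e ↔ M.IsColoop e :=
  isLoopOf_iff_isLoop

lemma IsCyclicSet.mem_closure_sdiff_singleton (hZ : IsCyclicSet M Z) (he : e ∈ Z) :
    e ∈ M.closure (Z \ {e}) := by
  have hnotColoop := hZ.2 e he
  rw [isColoopOf_iff_isColoop, isColoop_iff_forall_mem_isBase] at hnotColoop
  push Not at hnotColoop
  obtain ⟨B, hB, heB⟩ := hnotColoop
  rw [isBase_restrict_iff hZ.1] at hB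
  exact M.closure_subset_closure (subset_sdiff_singleton hB.subset heB) (hB.subset_closure he)

lemma IsCyclicSet.not_indep (hZ : IsCyclicSet M Z) (hne : Z.Nonempty) : ¬ M.Indep Z := by
  obtain ⟨e, he⟩ := hne
  exact fun hI ↦ hI.notMem_closure_sdiff_of_mem he (hZ.mem_closure_sdiff_singleton he)

lemma IsCyclicSet.exists_mem_notMem_closure (hZ : IsCyclicSet M Z) (he : e ∈ Z)
    (heK : e ∉ M.closure K) : ∃ f ∈ Z, f ≠ e ∧ f ∉ M.closure K := by
  by_contra! h
  exact heK (M.closure_subset_closure_of_subset_closure (fun f hf ↦ h f hf.1 hf.2)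
    (hZ.mem_closure_sdiff_singleton he))

lemma Matroid.IsFlat.exists_isBasis_insert_of_ssubset (hX : M.IsFlat X) (hXY : X ⊂ Y)
    (hY : Y ⊆ M.E) : ∃ K b, b ∉ K ∧ M.IsBasis (insert b K) Y ∧ X ⊆ M.closure K := by
  obtain ⟨I, hI⟩ := M.exists_isBasis X hX.subset_ground
  obtain ⟨J, hJ, hIJ⟩ := hI.indep.subset_isBasis_of_subset (hI.subset.trans hXY.subset) hY
  obtain ⟨b, hbJ, hbI⟩ : ∃ b ∈ J, b ∉ I := by
    by_contra! hJI
    have hYX : Y ⊆ X := by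
      rw [← hX.closure, ← hI.closure_eq_closure]
      exact hJ.subset_closure.trans (M.closure_subset_closure hJI)
    exact hXY.not_subset hYX
  refine ⟨J \ {b}, b, fun h ↦ h.2 rfl, by rwa [insert_sdiff_singleton, insert_eq_of_mem hbJ], ?_⟩
  exact hI.subset_closure.trans (M.closure_subset_closure (subset_sdiff_singleton hIJ hbI))

lemma Matroid.IsFlat.insert_indep_of_notMem (hY : M.IsFlat Y) {J : Set α} (hJ : M.Indep J)
    (hJY : J ⊆ Y) (he : e ∈ M.E) (heY : e ∉ Y) : M.Indep (insert e J) := by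
  rw [hJ.insert_indep_iff_of_notMem (fun h ↦ heY (hJY h))]
  exact ⟨he, fun h ↦ heY (hY.closure.subset (M.closure_subset_closure hJY h))⟩

lemma isMinorOf_contract_restrict (hS : X ⊆ (M ／ K).E) : IsMinorOf ((M ／ K) ↾ X) M :=
  ⟨K, (M ／ K).E \ X, by
    change _ = (M ／ K) ↾ ((M ／ K).E \ ((M ／ K).E \ X))
    rw [sdiff_sdiff_cancel_left hS]⟩

lemma isU01U12U11_restrict (hdistinct : [a, b, c, d].Nodup) (ha : ¬ M.Indep {a})
    (hbc : ¬ M.Indep {b, c}) (hbd : M.Indep {b, d}) (hcd : M.Indep {c, d}) :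
    IsU01U12U11 (M ↾ {a, b, c, d}) := by
  refine ⟨a, b, c, d, hdistinct, rfl, fun I hI ↦ ?_⟩
  rw [restrict_indep_iff, and_iff_left (show I ⊆ {a, b, c, d} from hI)]
  refine ⟨fun hIi ↦ ⟨fun haI ↦ ha (hIi.subset (singleton_subset_iff.2 haI)),
    fun hbcI ↦ hbc (hIi.subset hbcI)⟩, fun ⟨haI, hbcI⟩ ↦ ?_⟩
  by_cases hbI : b ∈ I
  · have hcI : c ∉ I := fun hcI ↦ hbcI (pair_subset hbI hcI)
    refine hbd.subset fun x hx ↦ ?_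
    rcases hI hx with rfl | rfl | rfl | rfl <;> simp_all
  · refine hcd.subset fun x hx ↦ ?_
    rcases hI hx with rfl | rfl | rfl | rfl <;> simp_all

lemma exists_isU01U12U11_minor_of_isBasis_insert (hY : M.IsFlat Y) (hbK : b ∉ K)
    (hJ : M.IsBasis (insert b K) Y) (ha : a ∈ M.closure K \ K) (hc : c ∈ Y \ M.closure K)
    (hcb : c ≠ b) (hd : d ∈ M.E \ Y) : ∃ N, IsMinorOf N M ∧ IsU01U12U11 N := by
  have hK : M.Indep K := hJ.indep.subset (subset_insert _ _)
  have hKY : K ⊆ Y := (subset_insert _ _).trans hJ.subset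
  have hbY : b ∈ Y := hJ.subset (mem_insert _ _)
  have haY : a ∈ Y := hY.closure.subset (M.closure_subset_closure hKY ha.1)
  have hbclK : b ∉ M.closure K := ((hK.insert_indep_iff_of_notMem hbK).1 hJ.indep).2
  have hcK : c ∉ K := fun h ↦ hc.2 (M.subset_closure K hK.subset_ground h)
  have hdK : d ∉ K := fun h ↦ hd.2 (hKY h)
  have hcontract {I : Set α} (hIK : Disjoint I K) : (M ／ K).Indep I ↔ M.Indep (I ∪ K) := by
    rw [hK.contract_indep_iff, and_iff_right hIK]
  have hbc : ¬ (M ／ K).Indep {b, c} := by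
    rw [hcontract (by simp [hbK, hcK]), insert_union, singleton_union]
    intro hbcK
    have hJ_eq := hJ.eq_of_subset_indep hbcK (insert_subset_insert (subset_insert _ _))
      (insert_subset hbY (insert_subset hc.1 hKY))
    exact hcK (((hJ_eq ▸ mem_insert_of_mem _ (mem_insert _ _)) : c ∈ insert b K).resolve_left hcb)
  have hbd : (M ／ K).Indep {b, d} := by
    rw [hcontract (by simp [hbK, hdK]), insert_union, singleton_union, insert_comm]
    exact hY.insert_indep_of_notMem hJ.indep hJ.subset hd.1 hd.2
  have hcd : (M ／ K).Indep {c, d} := by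
    rw [hcontract (by simp [hcK, hdK]), insert_union, singleton_union, insert_comm]
    have hKc : M.Indep (insert c K) :=
      (hK.insert_indep_iff_of_notMem hcK).2 ⟨hY.subset_ground hc.1, hc.2⟩
    exact hY.insert_indep_of_notMem hKc (insert_subset hc.1 hKY) hd.1 hd.2
  have hS : {a, b, c, d} ⊆ (M ／ K).E := by
    simp only [insert_subset_iff, singleton_subset_iff, contract_ground, mem_sdiff]
    exact ⟨⟨hY.subset_ground haY, ha.2⟩, ⟨hY.subset_ground hbY, hbK⟩,
      ⟨hY.subset_ground hc.1, hcK⟩, ⟨hd.1, hdK⟩⟩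
  refine ⟨_, isMinorOf_contract_restrict hS, isU01U12U11_restrict ?_ ?_ hbc hbd hcd⟩
  · simp [ne_of_mem_of_not_mem ha.1 hbclK, ne_of_mem_of_not_mem ha.1 hc.2, hcb.symm,
      ne_of_mem_of_not_mem haY hd.2, ne_of_mem_of_not_mem hbY hd.2,
      ne_of_mem_of_not_mem hc.1 hd.2]
  · exact (contract_isLoop_iff_mem_closure.2 ha).not_indep_of_mem (mem_singleton a)

theorem stmt12_general {α : Type*} (M : Matroid α)
    (hminor : ¬ ∃ N : Matroid α, IsMinorOf N M ∧ IsU01U12U11 N) :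
    ∀ X Y, ProperCyclicFlat M X → ProperCyclicFlat M Y → X ⊆ Y → X = Y := by
  rintro X Y ⟨hXflat, hXcyc, hXrk, -⟩ ⟨hYflat, hYcyc, -, hYE⟩ hXY
  by_contra hne
  obtain ⟨K, b, hbK, hJ, hXK⟩ :=
    hXflat.exists_isBasis_insert_of_ssubset (hXY.ssubset_of_ne hne) hYcyc.1
  have hK : M.Indep K := hJ.indep.subset (subset_insert _ _)
  have hXne : X.Nonempty := nonempty_iff_ne_empty.2 fun h ↦ hXrk (h ▸ mrk_empty M)
  obtain ⟨a, haX, haK⟩ : ∃ a ∈ X, a ∉ K :=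
    not_subset.1 fun h ↦ hXcyc.not_indep hXne (hK.subset h)
  obtain ⟨c, hcY, hcb, hcK⟩ := hYcyc.exists_mem_notMem_closure (hJ.subset (mem_insert _ _))
    ((hK.insert_indep_iff_of_notMem hbK).1 hJ.indep).2
  obtain ⟨d, hdE, hdY⟩ : ∃ d ∈ M.E, d ∉ Y := not_subset.1 fun h ↦ hYE (hYcyc.1.antisymm h)
  exact hminor (exists_isU01U12U11_minor_of_isBasis_insert hYflat hbK hJ ⟨hXK haX, haK⟩
    ⟨hcY, hcK⟩ hcb ⟨hdE, hdY⟩)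

theorem stmt12 {α : Type*} (M : Matroid α) (hfin : M.E.Finite)
    (hminor : ¬ ∃ N : Matroid α, IsMinorOf N M ∧ IsU01U12U11 N)
    (hloopless : ∀ e, ¬ IsLoopOf M e) (hcoloopless : ∀ e, ¬ IsColoopOf M e) :
    ∀ X Y, ProperCyclicFlat M X → ProperCyclicFlat M Y → X ⊆ Y → X = Y :=
  stmt12_general M hminor
end

section
/- The direct sum of two uniform matroids U_{r_1,n_1} and U_{r_2,n_2} is an elementary split matroid: it is represented on S = H_1 ∪ H_2 (where H_1, H_2 are the two disjoint ground sets) by hyperedges H_1, H_2 with values r = r_1 + r_2, r_1, r_2 satisfying (H1). -/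
open Matroid Set

variable {α : Type*}

/-! The two rank constraints of a direct sum of uniform matroids already force `|X| ≤ r₁ + r₂`, since
`|X| = |X ∩ H₁| + |X ∩ H₂|` for `X ⊆ H₁ ∪ H₂`; adding this redundant constraint exhibits the direct
sum as an elementary split matroid with hyperedges `H₁, H₂`, and (H1) holds because `H₁ ∩ H₂ = ∅`. -/

theorem Set.ncard_eq_ncard_inter_add_ncard_inter {X A B : Set α} (hX : X.Finite)
    (hAB : Disjoint A B) (hXAB : X ⊆ A ∪ B) : X.ncard = (X ∩ A).ncard + (X ∩ B).ncard := by
  have hdiff : X \ A = X ∩ B := by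
    ext x
    exact ⟨fun ⟨hx, hxA⟩ => ⟨hx, (hXAB hx).resolve_left hxA⟩,
      fun ⟨hx, hxB⟩ => ⟨hx, disjoint_right.1 hAB hxB⟩⟩
  rw [← hdiff, ncard_inter_add_ncard_sdiff_eq_ncard X A hX]

theorem isElemSplit_of_two_hyperedges (M : Matroid α) (hfin : M.E.Finite) {H₁ H₂ : Set α}
    (hH₁ : H₁ ⊆ M.E) (hH₂ : H₂ ⊆ M.E) {r r₁ r₂ : ℕ} (hr : r ≤ M.E.ncard)
    (hH : (H₁ ∩ H₂).ncard + r ≤ r₁ + r₂)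
    (hMI : ∀ X, X ⊆ M.E → (M.Indep X ↔ X.ncard ≤ r ∧
      (X ∩ H₁).ncard ≤ r₁ ∧ (X ∩ H₂).ncard ≤ r₂)) :
    IsElemSplit M := by
  refine ⟨2, ![H₁, H₂], r, ![r₁, r₂], hfin, hr, ?_, ?_, fun X hX => ?_⟩
  · intro i
    fin_cases i <;> assumption
  · intro i j hij
    fin_cases i <;> fin_cases j <;> simp_all [inter_comm H₂ H₁, add_comm r₂ r₁]
  · simp [hMI X hX, Fin.forall_fin_two]

theorem stmt14 {α : Type*} (M : Matroid α) (hfin : M.E.Finite)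
    (H₁ H₂ : Set α) (r₁ r₂ : ℕ) (hdisj : Disjoint H₁ H₂) (hE : M.E = H₁ ∪ H₂)
    (hr₁ : r₁ ≤ H₁.ncard) (hr₂ : r₂ ≤ H₂.ncard)
    (hMI : ∀ X, X ⊆ M.E → (M.Indep X ↔ (X ∩ H₁).ncard ≤ r₁ ∧ (X ∩ H₂).ncard ≤ r₂)) :
    IsElemSplit M ∧
      ((H₁ ∩ H₂).ncard + (r₁ + r₂) ≤ r₁ + r₂) ∧
      (∀ X, X ⊆ M.E → (M.Indep X ↔ X.ncard ≤ r₁ + r₂ ∧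
        (X ∩ H₁).ncard ≤ r₁ ∧ (X ∩ H₂).ncard ≤ r₂)) := by
  have hcard (X : Set α) (hX : X ⊆ M.E) : X.ncard = (X ∩ H₁).ncard + (X ∩ H₂).ncard :=
    ncard_eq_ncard_inter_add_ncard_inter (hfin.subset hX) hdisj (hE ▸ hX)
  have hH₁ : H₁ ⊆ M.E := hE ▸ subset_union_left
  have hH₂ : H₂ ⊆ M.E := hE ▸ subset_union_right
  have hrE : r₁ + r₂ ≤ M.E.ncard := by
    rw [hcard M.E subset_rfl, inter_eq_self_of_subset_right hH₁, inter_eq_self_of_subset_right hH₂]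
    omega
  have hH : (H₁ ∩ H₂).ncard + (r₁ + r₂) ≤ r₁ + r₂ := by simp [hdisj.inter_eq]
  have hIndep (X : Set α) (hX : X ⊆ M.E) : M.Indep X ↔ X.ncard ≤ r₁ + r₂ ∧
      (X ∩ H₁).ncard ≤ r₁ ∧ (X ∩ H₂).ncard ≤ r₂ := by
    rw [hMI X hX, hcard X hX]
    omega
  exact ⟨isElemSplit_of_two_hyperedges M hfin hH₁ hH₂ hrE hH hIndep, hH, hIndep⟩
end

section
/- Let M be a loopless, coloopless, connected matroid whose proper cyclic flats form a clutter, and suppose the disconnected case is excluded. Then for any two distinct proper cyclic flats F and G of M, |F ∩ G| + r_M(S) ≤ r_M(F) + r_M(G). -/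
open Matroid Set

variable {α : Type*}

/-!
`F ∪ G` spans a cyclic flat containing both `F` and `G`, so by the clutter condition it spans
the whole ground set; and a circuit inside `F ∩ G` would span a proper cyclic flat contained in
both, so `F ∩ G` is independent. Submodularity of the rank,
`r(F ∩ G) + r(F ∪ G) ≤ r(F) + r(G)`, then gives the inequality.
-/

namespace Matroid

variable {M : Matroid α} {X Y F G C : Set α} {e : α}

lemma isLoopOf_iff : IsLoopOf M e ↔ M.IsLoop e := by
  rw [IsLoopOf, ← singleton_dep, Dep, singleton_subset_iff, and_comm]

lemma isColoopOf_iff : IsColoopOf M e ↔ M.IsColoop e :=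
  isLoopOf_iff

lemma loopless_of_forall_not_isLoopOf (h : ∀ e, ¬ IsLoopOf M e) : M.Loopless :=
  loopless_iff_forall_not_isLoop.2 fun e _ he => h e (isLoopOf_iff.2 he)

-- Finiteness is needed: on an unbounded set of naturals `sSup` is the junk value `0`.
lemma mrk_eq_eRk (hfin : M.E.Finite) (X : Set α) : (mrk M X : ℕ∞) = M.eRk X := by
  obtain ⟨I, hI⟩ := M.exists_isBasis' X
  have hIfin : I.Finite := hfin.subset hI.indep.subset_ground
  have hmax : IsGreatest {n | ∃ J, M.Indep J ∧ J ⊆ X ∧ J.ncard = n} I.ncard := by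
    refine ⟨⟨I, hI.indep, hI.subset, rfl⟩, ?_⟩
    rintro _ ⟨J, hJ, hJX, rfl⟩
    have hle := hJ.encard_le_eRk_of_subset hJX
    rw [← hI.encard_eq_eRk, ← hIfin.cast_ncard_eq,
      ← (hfin.subset hJ.subset_ground).cast_ncard_eq] at hle
    exact_mod_cast hle
  rw [mrk, hmax.csSup_eq, hIfin.cast_ncard_eq, hI.encard_eq_eRk]

lemma mrk_eq_zero_iff (hfin : M.E.Finite) (hX : X ⊆ M.E) : mrk M X = 0 ↔ X ⊆ M.loops := by
  rw [← eRk_eq_zero_iff, ← mrk_eq_eRk hfin, Nat.cast_eq_zero]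

lemma isCyclicSet_iff :
    IsCyclicSet M X ↔ X ⊆ M.E ∧ ∀ e ∈ X, e ∈ M.closure (X \ {e}) := by
  refine and_congr_right fun hX => forall₂_congr fun e he => ?_
  rw [isColoopOf_iff, restrict_isColoop_iff hX]
  simp [he]

lemma IsCircuit.isCyclicSet (hC : M.IsCircuit C) : IsCyclicSet M C :=
  isCyclicSet_iff.2 ⟨hC.subset_ground, fun _ he => hC.mem_closure_sdiff_singleton_of_mem he⟩

lemma IsCyclicSet.union (hX : IsCyclicSet M X) (hY : IsCyclicSet M Y) :
    IsCyclicSet M (X ∪ Y) := by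
  rw [isCyclicSet_iff] at *
  refine ⟨union_subset hX.1 hY.1, fun e he => ?_⟩
  rcases he with heX | heY
  · exact M.closure_subset_closure (sdiff_subset_sdiff_left subset_union_left) (hX.2 e heX)
  · exact M.closure_subset_closure (sdiff_subset_sdiff_left subset_union_right) (hY.2 e heY)

lemma IsCyclicSet.closure (hX : IsCyclicSet M X) : IsCyclicSet M (M.closure X) := by
  rw [isCyclicSet_iff] at *
  refine ⟨M.closure_subset_ground X, fun e he => ?_⟩
  by_cases heX : e ∈ X
  · exact M.closure_subset_closure (sdiff_subset_sdiff_left (M.subset_closure X hX.1))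
      (hX.2 e heX)
  · have hXsub : X ⊆ M.closure X \ {e} := subset_sdiff_singleton (M.subset_closure X hX.1) heX
    exact M.closure_subset_closure_of_subset_closure
      ((M.subset_closure X hX.1).trans (M.closure_subset_closure hXsub)) he

lemma properCyclicFlat_of_not_subset_loops (hfin : M.E.Finite) (hF : M.IsFlat F)
    (hFcyc : IsCyclicSet M F) (hFloops : ¬ F ⊆ M.loops) (hFE : F ≠ M.E) :
    ProperCyclicFlat M F :=
  ⟨hF, hFcyc, fun h => hFloops ((mrk_eq_zero_iff hfin hF.subset_ground).1 h), hFE⟩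

lemma ProperCyclicFlat.closure_union_eq_ground (hfin : M.E.Finite)
    (hclutter : ∀ X Y, ProperCyclicFlat M X → ProperCyclicFlat M Y → X ⊆ Y → X = Y)
    (hF : ProperCyclicFlat M F) (hG : ProperCyclicFlat M G) (hne : F ≠ G) :
    M.closure (F ∪ G) = M.E := by
  by_contra hspan
  have hFG : F ∪ G ⊆ M.closure (F ∪ G) :=
    M.subset_closure _ (union_subset hF.1.subset_ground hG.1.subset_ground)
  have hFG_pcf : ProperCyclicFlat M (M.closure (F ∪ G)) :=
    properCyclicFlat_of_not_subset_loops hfin (M.isFlat_closure _) (hF.2.1.union hG.2.1).closure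
      (fun h => hF.2.2.1 ((mrk_eq_zero_iff hfin hF.1.subset_ground).2
        ((subset_union_left.trans hFG).trans h))) hspan
  exact hne ((hclutter _ _ hF hFG_pcf (subset_union_left.trans hFG)).trans
    (hclutter _ _ hG hFG_pcf (subset_union_right.trans hFG)).symm)

lemma ProperCyclicFlat.indep_inter [M.Loopless] (hfin : M.E.Finite)
    (hclutter : ∀ X Y, ProperCyclicFlat M X → ProperCyclicFlat M Y → X ⊆ Y → X = Y)
    (hF : ProperCyclicFlat M F) (hG : ProperCyclicFlat M G) (hne : F ≠ G) :
    M.Indep (F ∩ G) := by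
  by_contra hdep
  obtain ⟨C, hCFG, hC⟩ :=
    ((not_indep_iff (inter_subset_left.trans hF.1.subset_ground)).1 hdep).exists_isCircuit_subset
  have hCF : M.closure C ⊆ F :=
    hF.1.closure ▸ M.closure_subset_closure (hCFG.trans inter_subset_left)
  have hCG : M.closure C ⊆ G :=
    hG.1.closure ▸ M.closure_subset_closure (hCFG.trans inter_subset_right)
  have hC_pcf : ProperCyclicFlat M (M.closure C) :=
    properCyclicFlat_of_not_subset_loops hfin (M.isFlat_closure C) hC.isCyclicSet.closure
      (fun h => by simpa [M.loops_eq_empty] using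
        hC.nonempty.mono ((M.subset_closure C hC.subset_ground).trans h))
      (fun h => hF.2.2.2 (hF.1.subset_ground.antisymm (h ▸ hCF)))
  exact hne ((hclutter _ _ hC_pcf hF hCF).symm.trans (hclutter _ _ hC_pcf hG hCG))

end Matroid

theorem stmt16_general {α : Type*} (M : Matroid α) (hfin : M.E.Finite)
    (hloopless : ∀ e, ¬ IsLoopOf M e)
    (hclutter : ∀ X Y, ProperCyclicFlat M X → ProperCyclicFlat M Y → X ⊆ Y → X = Y) :
    ∀ F G, ProperCyclicFlat M F → ProperCyclicFlat M G → F ≠ G →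
      (F ∩ G).ncard + mrk M M.E ≤ mrk M F + mrk M G := by
  intro F G hF hG hne
  have := loopless_of_forall_not_isLoopOf hloopless
  have hind : M.Indep (F ∩ G) := hF.indep_inter hfin hclutter hG hne
  have hspan : M.closure (F ∪ G) = M.E := hF.closure_union_eq_ground hfin hclutter hG hne
  have hFGfin : (F ∩ G).Finite := hfin.subset hind.subset_ground
  suffices ((F ∩ G).ncard + mrk M M.E : ℕ∞) ≤ mrk M F + mrk M G by exact_mod_cast this
  simp only [mrk_eq_eRk hfin, hFGfin.cast_ncard_eq]
  rw [← hind.eRk_eq_encard, ← hspan, eRk_closure_eq]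
  exact M.eRk_inter_add_eRk_union_le F G

theorem stmt16 {α : Type*} (M : Matroid α) (hfin : M.E.Finite)
    (hloopless : ∀ e, ¬ IsLoopOf M e) (hcoloopless : ∀ e, ¬ IsColoopOf M e)
    (hconn : ConnectedM M)
    (hclutter : ∀ X Y, ProperCyclicFlat M X → ProperCyclicFlat M Y → X ⊆ Y → X = Y) :
    ∀ F G, ProperCyclicFlat M F → ProperCyclicFlat M G → F ≠ G →
      (F ∩ G).ncard + mrk M M.E ≤ mrk M F + mrk M G :=
  stmt16_general M hfin hloopless hclutter
end

section
/- If M is a connected binary elementary split matroid of rank at least 3 and corank at least 3 that is not paving, given by a non-redundant representation H_1,...,H_q, r, r_1,...,r_q, then q = 1 and M is isomorphic to the r-truncation of U_{1,|H_1|} ⊕ U_{r,r}, i.e., M is obtained from U_{r−1,r} by adding parallel copies of one element. -/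
/-!
The dependent set witnessing that `M` is not paving meets some hyperedge `H i` in more than
`rr i` elements, so `rr i + 2 ≤ r`. By (H1), every set with at most `rr i` elements in `H i`
and at most `r - rr i` outside it is independent. If `rr i ≥ 2`, or if `S - H i` has at least
`r - rr i + 2` elements, a contraction of such a set then restricts to `U_{2,4}`; so binarity forces
`rr i ≤ 1`, and `|S - H i| ≤ r` since `rr i ≥ 1` (otherwise `H i` consists of loops).
Connectivity, `r < r(H i) + r(S - H i) ≤ 1 + |S - H i|`, gives `|S - H i| = r`. A second
hyperedge would be disjoint from `H i` by (H1), hence equal to `S - H i`, and connectivity across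
it fails.
-/
open Matroid Set

variable {α : Type*}

theorem isUnif_mdelete_mcontract {M : Matroid α} {Z P : Set α} {k : ℕ} (hPE : P ⊆ M.E)
    (hZP : Disjoint Z P) (hP : P.Finite) (hind : ∀ I ⊆ P, M.Indep (Z ∪ I) ↔ I.ncard ≤ k) :
    IsUnif (mdelete (mcontract M Z) (M.E \ (Z ∪ P))) k P.ncard := by
  have hZ : M.Indep Z := by simpa using (hind ∅ (empty_subset _)).2 (by simp)
  change IsUnif (M ／ Z ＼ (M.E \ (Z ∪ P))) k P.ncard
  have hE : (M ／ Z ＼ (M.E \ (Z ∪ P))).E = P := by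
    ext x
    simp only [delete_ground, contract_ground, mem_sdiff, mem_union]
    have := @hPE x
    have := hZP.notMem_of_mem_right (a := x)
    tauto
  refine ⟨by rw [hE]; exact hP, by rw [hE], fun I hI => ?_⟩
  rw [hE] at hI
  rw [delete_indep_iff, hZ.contract_indep_iff, union_comm, hind I hI,
    and_iff_right (hZP.symm.mono_left hI), and_iff_left]
  exact disjoint_left.2 fun x hx hx' => hx'.2 (Or.inr (hI hx))

/-- Witness: contract `W ∪ Y` and restrict to `P`, where `P ⊆ A` has four elements, `W ⊆ A \ P` has
`a - 2` and `Y ⊆ B` has `b`. -/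
theorem exists_isMinorOf_isUnif_two_four {M : Matroid α} {A B : Set α} {a b : ℕ}
    (hrk : ∀ I, M.Indep I → I.ncard ≤ a + b) (hAE : A ⊆ M.E) (hAB : Disjoint A B)
    (hA : A.Finite) (hB : B.Finite) (ha : 2 ≤ a) (hAc : a + 2 ≤ A.ncard) (hBc : b ≤ B.ncard)
    (hind : ∀ X ⊆ A ∪ B, (X ∩ A).ncard ≤ a → (X ∩ B).ncard ≤ b → M.Indep X) :
    ∃ N, IsMinorOf N M ∧ IsUnif N 2 4 := by
  obtain ⟨P, hPA, hPc⟩ := exists_subset_card_eq (show 4 ≤ A.ncard by omega)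
  have hAPc : (A \ P).ncard = A.ncard - 4 := by rw [ncard_sdiff hPA (hA.subset hPA), hPc]
  obtain ⟨W, hWAP, hWc⟩ := exists_subset_card_eq (show a - 2 ≤ (A \ P).ncard by omega)
  obtain ⟨Y, hYB, hYc⟩ := exists_subset_card_eq hBc
  have hWA : W ⊆ A := hWAP.trans sdiff_subset
  have hWY : Disjoint W Y := hAB.mono hWA hYB
  have hWYP : Disjoint (W ∪ Y) P :=
    disjoint_union_left.2 ⟨subset_sdiff.1 hWAP |>.2, (hAB.mono_left hPA).symm.mono_left hYB⟩
  have hWYfin : (W ∪ Y).Finite := (hA.subset hWA).union (hB.subset hYB)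
  have hWYc : (W ∪ Y).ncard = a - 2 + b := by
    rw [ncard_union_eq hWY (hA.subset hWA) (hB.subset hYB), hWc, hYc]
  refine ⟨_, ⟨W ∪ Y, _, rfl⟩, hPc ▸ isUnif_mdelete_mcontract (hPA.trans hAE) hWYP
    (hA.subset hPA) fun I hI => ⟨fun hI' => ?_, fun hI2 => ?_⟩⟩
  · have := hrk _ hI'
    rw [ncard_union_eq (hWYP.mono_right hI) hWYfin ((hA.subset hPA).subset hI)] at this
    omega
  · have hIA : I ⊆ A := hI.trans hPA
    have hIfin : I.Finite := hA.subset hIA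
    refine hind _ (union_subset (union_subset_union hWA hYB) (hIA.trans subset_union_left)) ?_ ?_
    · have hsub : (W ∪ Y ∪ I) ∩ A ⊆ W ∪ I := by
        rintro x ⟨(hx | hx) | hx, hxA⟩
        · exact Or.inl hx
        · exact absurd hxA (hAB.notMem_of_mem_right (hYB hx))
        · exact Or.inr hx
      have := ncard_le_ncard hsub ((hA.subset hWA).union hIfin)
      have := ncard_union_le W I
      omega
    · have hsub : (W ∪ Y ∪ I) ∩ B ⊆ Y := by
        rintro x ⟨(hx | hx) | hx, hxB⟩
        · exact absurd hxB (hAB.notMem_of_mem_left (hWA hx))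
        · exact hx
        · exact absurd hxB (hAB.notMem_of_mem_left (hIA hx))
      exact hYc ▸ ncard_le_ncard hsub (hB.subset hYB)

theorem mrk_le {M : Matroid α} {Z : Set α} {k : ℕ}
    (h : ∀ I, M.Indep I → I ⊆ Z → I.ncard ≤ k) : mrk M Z ≤ k :=
  csSup_le ⟨0, ∅, M.empty_indep, empty_subset _, by simp⟩ fun _ ⟨I, hI, hIZ, hn⟩ => hn ▸ h I hI hIZ

theorem ConnectedM.mrk_ground_lt {M : Matroid α} (hM : ConnectedM M) {X : Set α} (hXE : X ⊆ M.E)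
    (hX : X.Nonempty) (hXne : X ≠ M.E) {a b : ℕ} (ha : ∀ I, M.Indep I → I ⊆ X → I.ncard ≤ a)
    (hb : ∀ I, M.Indep I → I ⊆ M.E \ X → I.ncard ≤ b) : mrk M M.E < a + b :=
  (hM X hXE hX hXne).trans_le (add_le_add (mrk_le ha) (mrk_le hb))

/-- Conditions (H1)–(H4) of a non-redundant representation of an elementary split matroid. -/
structure IsNonRedundantRep {q : ℕ} (M : Matroid α) (r : ℕ) (H : Fin q → Set α) (rr : Fin q → ℕ) :
    Prop where
  subset_ground : ∀ i, H i ⊆ M.E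
  ncard_inter_add_le : ∀ i j, i ≠ j → (H i ∩ H j).ncard + r ≤ rr i + rr j
  le_ncard_diff_add : ∀ i, r ≤ (M.E \ H i).ncard + rr i
  rr_add_one_le : ∀ i, rr i + 1 ≤ r
  rr_add_one_le_ncard : ∀ i, rr i + 1 ≤ (H i).ncard
  indep_iff : ∀ X, X ⊆ M.E → (M.Indep X ↔ X.ncard ≤ r ∧ ∀ i, (X ∩ H i).ncard ≤ rr i)

namespace IsNonRedundantRep

variable {q r : ℕ} {M : Matroid α} {H : Fin q → Set α} {rr : Fin q → ℕ}

theorem ncard_le (hR : IsNonRedundantRep M r H rr) {I : Set α} (hI : M.Indep I) : I.ncard ≤ r :=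
  ((hR.indep_iff I hI.subset_ground).1 hI).1

theorem ncard_le_rr (hR : IsNonRedundantRep M r H rr) {I : Set α} (hI : M.Indep I) {i : Fin q}
    (hIH : I ⊆ H i) : I.ncard ≤ rr i := by
  simpa [inter_eq_left.2 hIH] using ((hR.indep_iff I hI.subset_ground).1 hI).2 i

theorem indep_of_ncard_inter_le (hR : IsNonRedundantRep M r H rr) (hfin : M.E.Finite) {X : Set α}
    (hXE : X ⊆ M.E) {i : Fin q} (hin : (X ∩ H i).ncard ≤ rr i) (hout : (X \ H i).ncard + rr i ≤ r) :
    M.Indep X := by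
  have hX : X.Finite := hfin.subset hXE
  have hsplit := ncard_inter_add_ncard_sdiff_eq_ncard X (H i) hX
  refine (hR.indep_iff X hXE).2 ⟨by omega, fun j => ?_⟩
  obtain rfl | hij := eq_or_ne i j
  · exact hin
  -- (H1): `|X ∩ H j| ≤ |H i ∩ H j| + |X \ H i| ≤ (rr i + rr j - r) + (r - rr i)`.
  have hsub : X ∩ H j ⊆ (H i ∩ H j) ∪ X \ H i := fun x ⟨hxX, hxj⟩ =>
    (em (x ∈ H i)).imp (fun hxi => ⟨hxi, hxj⟩) fun hxi => ⟨hxX, hxi⟩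
  have := ncard_le_ncard hsub (((hfin.subset (hR.subset_ground i)).inter_of_left _).union hX.sdiff)
  have := ncard_union_le (H i ∩ H j) (X \ H i)
  have := hR.ncard_inter_add_le i j hij
  omega

theorem exists_rr_add_two_le (hR : IsNonRedundantRep M r H rr) (hfin : M.E.Finite)
    (h : ¬ ∀ X, X ⊆ M.E → X.ncard + 1 ≤ r → M.Indep X) : ∃ i, rr i + 2 ≤ r := by
  push Not at h
  obtain ⟨X, hXE, hXr, hX⟩ := h
  rw [hR.indep_iff X hXE] at hX
  push Not at hX
  obtain ⟨i, hi⟩ := hX (by omega)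
  have := ncard_le_ncard (inter_subset_left : X ∩ H i ⊆ X) (hfin.subset hXE)
  exact ⟨i, by omega⟩

theorem lt_rr_add (hR : IsNonRedundantRep M r H rr) (hconn : ConnectedM M) (hrank : mrk M M.E = r)
    (i : Fin q) {b : ℕ} (hb : ∀ I, M.Indep I → I ⊆ M.E \ H i → I.ncard ≤ b) : r < rr i + b := by
  have hne : (H i).Nonempty :=
    nonempty_of_ncard_ne_zero (by have := hR.rr_add_one_le_ncard i; omega)
  have hproper : H i ≠ M.E := fun h => by
    have hcompl := hR.le_ncard_diff_add i
    rw [h, sdiff_self, ncard_empty] at hcompl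
    have := hR.rr_add_one_le i
    omega
  exact hrank ▸ hconn.mrk_ground_lt (hR.subset_ground i) hne hproper
    (fun _ hI hIH => hR.ncard_le_rr hI hIH) hb

theorem one_le_rr (hR : IsNonRedundantRep M r H rr) (hconn : ConnectedM M) (hrank : mrk M M.E = r)
    (i : Fin q) : 1 ≤ rr i := by
  have := hR.lt_rr_add hconn hrank i fun _ hI _ => hR.ncard_le hI
  omega

theorem ncard_diff_add_rr_le (hR : IsNonRedundantRep M r H rr) (hfin : M.E.Finite)
    (hbinary : ¬ ∃ N : Matroid α, IsMinorOf N M ∧ IsUnif N 2 4) {i : Fin q} (hi : rr i + 2 ≤ r) :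
    (M.E \ H i).ncard + rr i ≤ r + 1 := by
  by_contra! hlt
  refine hbinary <| exists_isMinorOf_isUnif_two_four (a := r - rr i) (b := rr i)
    (fun _ hI => (hR.ncard_le hI).trans (by omega)) sdiff_subset disjoint_sdiff_left hfin.sdiff
    (hfin.subset (hR.subset_ground i)) (by omega) (by omega)
    (by have := hR.rr_add_one_le_ncard i; omega) fun X hX hout hin => ?_
  rw [sdiff_union_of_subset (hR.subset_ground i)] at hX
  rw [← inter_sdiff_assoc, inter_eq_left.2 hX] at hout
  exact hR.indep_of_ncard_inter_le hfin hX hin (by omega)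

theorem rr_le_one (hR : IsNonRedundantRep M r H rr) (hfin : M.E.Finite)
    (hbinary : ¬ ∃ N : Matroid α, IsMinorOf N M ∧ IsUnif N 2 4) (hcorank : r + 3 ≤ M.E.ncard)
    {i : Fin q} (hi : (M.E \ H i).ncard + rr i ≤ r + 1) : rr i ≤ 1 := by
  by_contra! hlt
  have hsplit := ncard_sdiff_add_ncard_of_subset (hR.subset_ground i) hfin
  have := hR.rr_add_one_le i
  refine hbinary <| exists_isMinorOf_isUnif_two_four (a := rr i) (b := r - rr i)
    (fun _ hI => (hR.ncard_le hI).trans (by omega)) (hR.subset_ground i) disjoint_sdiff_right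
    (hfin.subset (hR.subset_ground i)) hfin.sdiff (by omega) (by omega)
    (by have := hR.le_ncard_diff_add i; omega) fun X hX hin hout => ?_
  rw [union_sdiff_cancel (hR.subset_ground i)] at hX
  rw [← inter_sdiff_assoc, inter_eq_left.2 hX] at hout
  exact hR.indep_of_ncard_inter_le hfin hX hin (by omega)

theorem eq_of_rr_eq_one (hR : IsNonRedundantRep M r H rr) (hfin : M.E.Finite)
    (hconn : ConnectedM M) (hrank : mrk M M.E = r) {i : Fin q} (hi : rr i = 1)
    (hc : (M.E \ H i).ncard = r) (j : Fin q) : j = i := by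
  by_contra hji
  have h1 := hR.ncard_inter_add_le i j (Ne.symm hji)
  have h3 := hR.rr_add_one_le j
  have hdisj : H i ∩ H j = ∅ :=
    (ncard_eq_zero (hfin.subset (inter_subset_left.trans (hR.subset_ground i)))).1 (by omega)
  have hHj : H j = M.E \ H i := by
    refine eq_of_subset_of_ncard_le (fun x hx => ⟨hR.subset_ground j hx, fun hxi => ?_⟩) ?_
      hfin.sdiff
    · exact (hdisj ▸ ⟨hxi, hx⟩ : x ∈ (∅ : Set α))
    · have := hR.rr_add_one_le_ncard j
      omega
  have := hR.lt_rr_add hconn hrank j (b := rr i) fun _ hI hIs =>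
    hR.ncard_le_rr hI (by rwa [hHj, sdiff_sdiff_cancel_left (hR.subset_ground i)] at hIs)
  omega

end IsNonRedundantRep

theorem stmt17_general {α : Type*} (M : Matroid α) (hfin : M.E.Finite)
    (hconn : ConnectedM M)
    (hbinary : ¬ ∃ N : Matroid α, IsMinorOf N M ∧ IsUnif N 2 4)
    (q r : ℕ) (H : Fin q → Set α) (rr : Fin q → ℕ)
    (hrank : mrk M M.E = r) (hcorank : r + 3 ≤ M.E.ncard)
    (hnotpaving : ¬ ∀ X, X ⊆ M.E → X.ncard + 1 ≤ r → M.Indep X)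
    (hH : ∀ i, H i ⊆ M.E)
    (h1 : ∀ i j : Fin q, i ≠ j → (H i ∩ H j).ncard + r ≤ rr i + rr j)
    (h2 : ∀ i, r ≤ (M.E \ H i).ncard + rr i)
    (h3 : ∀ i, rr i + 1 ≤ r)
    (h4 : ∀ i, rr i + 1 ≤ (H i).ncard)
    (hMI : ∀ X, X ⊆ M.E → (M.Indep X ↔ X.ncard ≤ r ∧ ∀ i, (X ∩ H i).ncard ≤ rr i)) :
    q = 1 ∧ ∀ i : Fin q, rr i = 1 ∧ (M.E \ H i).ncard = r ∧
      ∀ X, X ⊆ M.E → (M.Indep X ↔ X.ncard ≤ r ∧ (X ∩ H i).ncard ≤ 1) := by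
  have hR : IsNonRedundantRep M r H rr := ⟨hH, h1, h2, h3, h4, hMI⟩
  obtain ⟨i, hi⟩ := hR.exists_rr_add_two_le hfin hnotpaving
  have hco := hR.ncard_diff_add_rr_le hfin hbinary hi
  have hrr : rr i = 1 :=
    le_antisymm (hR.rr_le_one hfin hbinary hcorank hco) (hR.one_le_rr hconn hrank i)
  have hc : (M.E \ H i).ncard = r := by
    have := hR.lt_rr_add hconn hrank i fun _ _ hI => ncard_le_ncard hI hfin.sdiff
    omega
  have huniq : ∀ j, j = i := hR.eq_of_rr_eq_one hfin hconn hrank hrr hc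
  have hq : q ≤ 1 := by
    simpa using Fintype.card_le_one_iff.2 fun j k => (huniq j).trans (huniq k).symm
  refine ⟨le_antisymm hq i.pos, fun j => ?_⟩
  obtain rfl := huniq j
  refine ⟨hrr, hc, fun X hXE => ?_⟩
  rw [hMI X hXE, ← hrr]
  exact and_congr_right fun _ => ⟨fun h => h j, fun h k => huniq k ▸ h⟩

theorem stmt17 {α : Type*} (M : Matroid α) (hfin : M.E.Finite)
    (hconn : ConnectedM M)
    (hbinary : ¬ ∃ N : Matroid α, IsMinorOf N M ∧ IsUnif N 2 4)
    (q r : ℕ) (H : Fin q → Set α) (rr : Fin q → ℕ)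
    (hrank : mrk M M.E = r) (hr3 : 3 ≤ r) (hcorank : r + 3 ≤ M.E.ncard)
    (hnotpaving : ¬ ∀ X, X ⊆ M.E → X.ncard + 1 ≤ r → M.Indep X)
    (hH : ∀ i, H i ⊆ M.E) (hrS : r ≤ M.E.ncard)
    (h1 : ∀ i j : Fin q, i ≠ j → (H i ∩ H j).ncard + r ≤ rr i + rr j)
    (h2 : ∀ i, r ≤ (M.E \ H i).ncard + rr i)
    (h3 : ∀ i, rr i + 1 ≤ r)
    (h4 : ∀ i, rr i + 1 ≤ (H i).ncard)
    (hMI : ∀ X, X ⊆ M.E → (M.Indep X ↔ X.ncard ≤ r ∧ ∀ i, (X ∩ H i).ncard ≤ rr i)) :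
    q = 1 ∧ ∀ i : Fin q, rr i = 1 ∧ (M.E \ H i).ncard = r ∧
      ∀ X, X ⊆ M.E → (M.Indep X ↔ X.ncard ≤ r ∧ (X ∩ H i).ncard ≤ 1) :=
  stmt17_general M hfin hconn hbinary q r H rr hrank hcorank hnotpaving hH h1 h2 h3 h4 hMI
end
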